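/- arXiv:2310.12792 — 7 statements merged into one kernel-verified Lean document; each statement's English description precedes it below -/
import Mathlib

section
/- There is an absolute constant C > 0 such that for every finite set S with |S| = n ≥ 2 there exists a set Π of at most C·n linear orders on S such that every pair of distinct elements of S is adjacent (consecutive) in at least one order of Π. -/
open Metric Set

/-- Points of `ℝ^d` with the Euclidean norm. -/
abbrev Pt (d : ℕ) : Type := EuclideanSpace ℝ (Fin d)

/-- The half-open unit cube `[0,1)^d`. -/
def unitCube (d : ℕ) : Set (Pt d) := {x | ∀ i, 0 ≤ x i ∧ x i < 1}

/-- A linear order defined on a subset `dom` of `X`, given by its strict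
relation `lt`: irreflexive, transitive and total on `dom`. -/
structure LinOrderOn (X : Type*) where
  dom : Set X
  lt : X → X → Prop
  irrefl : ∀ x ∈ dom, ¬ lt x x
  trans : ∀ x ∈ dom, ∀ y ∈ dom, ∀ z ∈ dom, lt x y → lt y z → lt x z
  total : ∀ x ∈ dom, ∀ y ∈ dom, x ≠ y → lt x y ∨ lt y x

/-- Position of `v` in the Walecki zigzag path `k, k+1, k-1, k+2, k-2, ...`. -/
def zpos (n : ℕ) (k v : ZMod n) : ℕ :=
  if (v - k).val = 0 then 0
  else if 2 * (v - k).val ≤ n then 2 * (v - k).val - 1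
  else 2 * (n - (v - k).val)

lemma zpos_inj (n : ℕ) [NeZero n] (k : ZMod n) : Function.Injective (zpos n k) := by
  intro v₁ v₂ h
  have h1 : (v₁ - k).val < n := ZMod.val_lt _
  have h2 : (v₂ - k).val < n := ZMod.val_lt _
  have : (v₁ - k).val = (v₂ - k).val := by
    unfold zpos at h
    split_ifs at h <;> omega
  have := ZMod.val_injective n this
  exact sub_left_injective this

lemma natCast_val' (n : ℕ) [NeZero n] (x : ZMod n) : (x.val : ZMod n) = x := by
  simp [ZMod.natCast_val]

/-- The odd-difference case of adjacency. -/
lemma zpos_adj_odd (n : ℕ) [NeZero n] (hn : 2 ≤ n) (a b : ZMod n)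
    (hodd : (b - a).val % 2 = 1) : ∃ k, zpos n k a + 1 = zpos n k b := by
  set m := (b - a).val with hm
  have hmlt : m < n := ZMod.val_lt _
  have hm1 : 1 ≤ m := by omega
  set t := (m - 1) / 2 with ht
  have hmt : m = 2 * t + 1 := by omega
  refine ⟨a + (t : ZMod n), ?_⟩
  have htn : t < n := by omega
  have hvt : ((t : ZMod n)).val = t := ZMod.val_cast_of_lt htn
  have hba : b - a = (m : ZMod n) := (natCast_val' n _).symm
  have hb : b - (a + (t : ZMod n)) = ((t + 1 : ℕ) : ZMod n) := by
    have : b - (a + (t : ZMod n)) = (b - a) - (t : ZMod n) := by ring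
    rw [this, hba]
    push_cast
    rw [hmt]
    push_cast
    ring
  have ht1n : t + 1 < n := by omega
  have hub : (b - (a + (t : ZMod n))).val = t + 1 := by
    rw [hb, ZMod.val_cast_of_lt ht1n]
  have ha : a - (a + (t : ZMod n)) = -(t : ZMod n) := by ring
  rcases Nat.eq_zero_or_pos t with ht0 | htpos
  · -- t = 0 : zpos a = 0, zpos b = 1
    have hua : (a - (a + (t : ZMod n))).val = 0 := by
      rw [ha, ht0]; simp
    unfold zpos
    rw [hua, hub, ht0]
    have h3 : ¬ (0 + 1 = 0) := by omega
    have h4 : 2 * (0 + 1) ≤ n := by omega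
    rw [if_pos rfl, if_neg h3, if_pos h4]
  · have hne : (t : ZMod n) ≠ 0 := by
      intro h
      have := ZMod.val_cast_of_lt htn
      rw [h] at this
      simp at this
      omega
    haveI : NeZero ((t : ZMod n)) := ⟨hne⟩
    have hua : (a - (a + (t : ZMod n))).val = n - t := by
      rw [ha, ZMod.val_neg_of_ne_zero, hvt]
    unfold zpos
    simp only [hua, hub]
    have h1 : ¬ (n - t = 0) := by omega
    have h2 : ¬ (2 * (n - t) ≤ n) := by omega
    have h3 : ¬ (t + 1 = 0) := by omega
    have h4 : 2 * (t + 1) ≤ n := by omega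
    rw [if_neg h1, if_neg h2, if_neg h3, if_pos h4]
    omega

/-- The even/even case of adjacency. -/
lemma zpos_adj_even (n : ℕ) [NeZero n] (hn : 2 ≤ n) (a b : ZMod n) (hab : a ≠ b)
    (heven : (a - b).val % 2 = 0) : ∃ k, zpos n k a + 1 = zpos n k b := by
  set m := (a - b).val with hm
  have hmlt : m < n := ZMod.val_lt _
  have hm0 : m ≠ 0 := by
    intro h
    apply hab
    have : a - b = 0 := by
      have := natCast_val' n (a - b)
      rw [← hm, h] at this
      simpa using this.symm
    linear_combination this
  have hm2 : 2 ≤ m := by omega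
  set s := m / 2 with hs
  have hms : m = 2 * s := by omega
  have hs1 : 1 ≤ s := by omega
  have hsn : s < n := by omega
  refine ⟨a - (s : ZMod n), ?_⟩
  have hvs : ((s : ZMod n)).val = s := ZMod.val_cast_of_lt hsn
  have hsne : (s : ZMod n) ≠ 0 := by
    intro h; rw [h] at hvs; simp at hvs; omega
  haveI : NeZero ((s : ZMod n)) := ⟨hsne⟩
  have hab' : a - b = (m : ZMod n) := (natCast_val' n _).symm
  have hua : (a - (a - (s : ZMod n))).val = s := by
    have : a - (a - (s : ZMod n)) = (s : ZMod n) := by ring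
    rw [this, hvs]
  have hb : b - (a - (s : ZMod n)) = -(s : ZMod n) := by
    have h1 : b - (a - (s : ZMod n)) = -(a - b) + (s : ZMod n) := by ring
    rw [h1, hab', hms]
    push_cast
    ring
  have hub : (b - (a - (s : ZMod n))).val = n - s := by
    rw [hb, ZMod.val_neg_of_ne_zero, hvs]
  unfold zpos
  simp only [hua, hub]
  have h1 : ¬ (s = 0) := by omega
  have h2 : 2 * s ≤ n := by omega
  have h3 : ¬ (n - s = 0) := by omega
  have h4 : ¬ (2 * (n - s) ≤ n) := by omega
  rw [if_neg h1, if_pos h2, if_neg h3, if_neg h4]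
  omega

lemma zpos_adj (n : ℕ) [NeZero n] (hn : 2 ≤ n) (a b : ZMod n) (hab : a ≠ b) :
    ∃ k, zpos n k a + 1 = zpos n k b ∨ zpos n k b + 1 = zpos n k a := by
  rcases Nat.even_or_odd ((b - a).val) with he | ho
  · rcases Nat.even_or_odd ((a - b).val) with he' | ho'
    · obtain ⟨k, hk⟩ := zpos_adj_even n hn a b hab (Nat.even_iff.mp he')
      exact ⟨k, Or.inl hk⟩
    · obtain ⟨k, hk⟩ := zpos_adj_odd n hn b a (Nat.odd_iff.mp ho')
      exact ⟨k, Or.inr hk⟩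
  · obtain ⟨k, hk⟩ := zpos_adj_odd n hn a b (Nat.odd_iff.mp ho)
    exact ⟨k, Or.inl hk⟩

theorem stmt_2 :
    ∃ C : ℝ, 0 < C ∧
      ∀ (X : Type) (S : Finset X) (n : ℕ), S.card = n → 2 ≤ n →
        ∃ Ors : Set (LinOrderOn X),
          Ors.Finite ∧
          (∀ σ ∈ Ors, σ.dom = ↑S) ∧
          (Ors.ncard : ℝ) ≤ C * n ∧
          ∀ x ∈ S, ∀ y ∈ S, x ≠ y →
            ∃ σ ∈ Ors, ∀ z ∈ S, ¬(σ.lt x z ∧ σ.lt z y) ∧ ¬(σ.lt y z ∧ σ.lt z x) := by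
  classical
  refine ⟨1, one_pos, ?_⟩
  intro X S n hcard hn
  subst hcard
  haveI : NeZero S.card := ⟨by omega⟩
  -- embed S into ZMod S.card
  set N := S.card with hN
  let g : X → ZMod N := fun x => if h : x ∈ S then ((S.equivFin ⟨x, h⟩ : ℕ) : ZMod N) else 0
  have hg : ∀ x ∈ S, ∀ y ∈ S, g x = g y → x = y := by
    intro x hx y hy hxy
    simp only [g, dif_pos hx, dif_pos hy] at hxy
    have h1 : ((S.equivFin ⟨x, hx⟩ : ℕ)) < N := (S.equivFin ⟨x, hx⟩).isLt
    have h2 : ((S.equivFin ⟨y, hy⟩ : ℕ)) < N := (S.equivFin ⟨y, hy⟩).isLt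
    have := congrArg ZMod.val hxy
    rw [ZMod.val_cast_of_lt h1, ZMod.val_cast_of_lt h2] at this
    have heq : S.equivFin ⟨x, hx⟩ = S.equivFin ⟨y, hy⟩ := Fin.ext this
    have := S.equivFin.injective heq
    exact congrArg Subtype.val this
  let σ : ZMod N → LinOrderOn X := fun k =>
    { dom := ↑S
      lt := fun x y => x ∈ S ∧ y ∈ S ∧ zpos N k (g x) < zpos N k (g y)
      irrefl := by intro x _ h; exact lt_irrefl _ h.2.2
      trans := by
        intro x _ y _ z _ h1 h2
        exact ⟨h1.1, h2.2.1, lt_trans h1.2.2 h2.2.2⟩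
      total := by
        intro x hx y hy hxy
        rcases lt_trichotomy (zpos N k (g x)) (zpos N k (g y)) with h | h | h
        · exact Or.inl ⟨hx, hy, h⟩
        · exact absurd (hg x hx y hy (zpos_inj N k h)) hxy
        · exact Or.inr ⟨hy, hx, h⟩ }
  refine ⟨↑(Finset.image σ Finset.univ), Finset.finite_toSet _, ?_, ?_, ?_⟩
  · intro τ hτ
    simp only [Finset.coe_image, Set.mem_image] at hτ
    obtain ⟨k, _, rfl⟩ := hτ
    rfl
  · rw [Set.ncard_coe_finset]
    have h1 : (Finset.image σ Finset.univ).card ≤ Fintype.card (ZMod N) :=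
      le_trans (Finset.card_image_le) (le_of_eq (Finset.card_univ))
    rw [ZMod.card] at h1
    rw [one_mul]
    exact_mod_cast h1
  · intro x hx y hy hxy
    have hgxy : g x ≠ g y := fun h => hxy (hg x hx y hy h)
    obtain ⟨k, hk⟩ := zpos_adj N hn (g x) (g y) hgxy
    refine ⟨σ k, by simp [Finset.coe_image], ?_⟩
    intro z _
    constructor
    · rintro ⟨⟨_, _, h1⟩, ⟨_, _, h2⟩⟩
      omega
    · rintro ⟨⟨_, _, h1⟩, ⟨_, _, h2⟩⟩
      omega
end

section
/- Let d ≥ 1, let D = 2·⌈d/2⌉, and for i = 0,…,D let ν_i = (i/(D+1), …, i/(D+1)) ∈ ℝ^d. Then for any two distinct points p, q ∈ [0,1)^d there exist i ∈ {0,…,D}, an integer ℓ ≥ 0, and a ∈ {0,…,2^ℓ−1}^d such that both p + ν_i and q + ν_i lie in the dyadic cell ∏_{j=1}^d [a_j · 2^{1−ℓ}, (a_j + 1) · 2^{1−ℓ}) and its side length satisfies 2^{1−ℓ} ≤ 2(D+1)·‖p − q‖. -/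
open Metric Set

/-- Key per-coordinate lemma: if the shifted floors of `x` and `y` at scale
`2^{-L}` differ, then the shift index `i` satisfies a divisibility relation. -/
lemma quad_key (N L : ℕ) (hN : 0 < N) (x y : ℝ) (hxy : x ≤ y)
    (hlen : (N : ℝ) * 2 ^ L * (y - x) < 1) (i : ℕ)
    (hne : ⌊(x + (i : ℝ) / N) * 2 ^ L⌋ ≠ ⌊(y + (i : ℝ) / N) * 2 ^ L⌋) :
    (N : ℤ) ∣ ⌊(N : ℝ) * 2 ^ L * y⌋ + (i : ℤ) * 2 ^ L := by
  have hN' : (0:ℝ) < N := by exact_mod_cast hN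
  have hP : (0:ℝ) < 2 ^ L := by positivity
  set A : ℝ := (N : ℝ) * 2 ^ L * x + (i : ℝ) * 2 ^ L with hA
  set B : ℝ := (N : ℝ) * 2 ^ L * y + (i : ℝ) * 2 ^ L with hB
  have hxA : (x + (i : ℝ) / N) * 2 ^ L = A / N := by field_simp [hA]; ring
  have hyB : (y + (i : ℝ) / N) * 2 ^ L = B / N := by field_simp [hB]; ring
  rw [hxA, hyB] at hne
  have hAB : A ≤ B := by
    rw [hA, hB]
    nlinarith [mul_le_mul_of_nonneg_left hxy (le_of_lt (mul_pos hN' hP))]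
  have hBA : B - A < 1 := by rw [hA, hB]; nlinarith [hlen]
  have hlt : ⌊A / N⌋ < ⌊B / N⌋ :=
    lt_of_le_of_ne (Int.floor_le_floor (by gcongr)) hne
  set K : ℤ := ⌊B / N⌋ with hK
  have h1 : (K : ℝ) * N ≤ B := by
    have h0 := Int.floor_le (B / N)
    rw [← hK] at h0
    calc (K : ℝ) * N ≤ B / N * N := by gcongr
    _ = B := by field_simp
  have h2 : A < (K : ℝ) * N := by
    have h3 : A / N < (⌊A / N⌋ : ℝ) + 1 := Int.lt_floor_add_one _
    have h4 : ((⌊A / N⌋ : ℝ)) + 1 ≤ K := by exact_mod_cast hlt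
    have h5 : A / N < (K : ℝ) := lt_of_lt_of_le h3 h4
    calc A = A / N * N := by field_simp
    _ < (K:ℝ) * N := by gcongr
  rw [hA] at h2 hBA
  rw [hB] at h1 hBA
  have hfloor : ⌊(N : ℝ) * 2 ^ L * y⌋ = K * N - (i : ℤ) * 2 ^ L := by
    rw [Int.floor_eq_iff]
    constructor
    · push_cast
      linarith
    · push_cast
      linarith
  rw [hfloor]
  exact ⟨K, by ring⟩

/-- Uniqueness of the bad shift for a coordinate: the divisibility relation
determines `i` modulo the odd number `N`. -/
lemma quad_unique (N L : ℕ) (hNodd : Odd N) (X : ℤ) (i i' : ℕ) (hi : i < N) (hi' : i' < N)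
    (h : (N:ℤ) ∣ X + (i:ℤ) * 2 ^ L) (h' : (N:ℤ) ∣ X + (i':ℤ) * 2 ^ L) : i = i' := by
  have hdvd : (N:ℤ) ∣ ((i:ℤ) - i') * 2 ^ L := by
    obtain ⟨k, hk⟩ := h; obtain ⟨k', hk'⟩ := h'
    exact ⟨k - k', by linear_combination hk - hk'⟩
  have hcop : IsCoprime (N:ℤ) ((2:ℤ) ^ L) := by
    have h2 : Nat.Coprime N (2 ^ L) := Nat.Coprime.pow_right _ (Nat.coprime_two_right.mpr hNodd)
    have h3 := Nat.isCoprime_iff_coprime.mpr h2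
    push_cast at h3
    exact h3
  have h3 : (N:ℤ) ∣ (i:ℤ) - i' := hcop.dvd_of_dvd_mul_right hdvd
  have h4 : (i:ℤ) - i' = 0 := Int.eq_zero_of_abs_lt_dvd h3 (by rw [abs_lt]; omega)
  omega

/-- Pigeonhole: a predicate with at most one witness below `N` per coordinate,
with fewer than `N` coordinates, misses some shift below `N`. -/
lemma exists_good (N d : ℕ) (hdN : d < N) (P : Fin d → ℕ → Prop)
    (huniq : ∀ j i i', i < N → i' < N → P j i → P j i' → i = i') :
    ∃ i < N, ∀ j, ¬ P j i := by
  by_contra hcon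
  push_neg at hcon
  have hch : ∀ i : Fin N, ∃ j : Fin d, P j i := fun i => hcon i i.isLt
  choose g hg using hch
  have hcard : Fintype.card (Fin d) < Fintype.card (Fin N) := by simpa
  obtain ⟨i, i', hne, heq⟩ := Fintype.exists_ne_map_eq_of_card_lt g hcard
  have h2 : P (g i) i' := heq ▸ hg i'
  exact hne (Fin.ext (huniq (g i) i i' i.isLt i'.isLt (hg i) h2))

theorem stmt_9 (d : ℕ) (hd : 1 ≤ d) :
    letI D : ℕ := 2 * ((d + 1) / 2)
    ∀ p ∈ unitCube d, ∀ q ∈ unitCube d, p ≠ q →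
      ∃ i ≤ D, ∃ (ℓ : ℕ) (a : Fin d → ℕ),
        (∀ j, a j < 2 ^ ℓ) ∧
        (∀ j, (a j : ℝ) * (2 : ℝ) ^ ((1 : ℤ) - ℓ) ≤ p j + (i : ℝ) / (D + 1) ∧
              p j + (i : ℝ) / (D + 1) < ((a j : ℝ) + 1) * (2 : ℝ) ^ ((1 : ℤ) - ℓ)) ∧
        (∀ j, (a j : ℝ) * (2 : ℝ) ^ ((1 : ℤ) - ℓ) ≤ q j + (i : ℝ) / (D + 1) ∧
              q j + (i : ℝ) / (D + 1) < ((a j : ℝ) + 1) * (2 : ℝ) ^ ((1 : ℤ) - ℓ)) ∧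
        (2 : ℝ) ^ ((1 : ℤ) - ℓ) ≤ 2 * ((D : ℝ) + 1) * dist p q := by
  intro p hp q hq hpq
  set D : ℕ := 2 * ((d + 1) / 2) with hD
  set N : ℕ := D + 1 with hNdef
  have hN : 0 < N := Nat.succ_pos _
  have hNR : ((D:ℝ) + 1) = (N:ℝ) := by rw [hNdef]; push_cast; ring
  have hN' : (0:ℝ) < N := by exact_mod_cast hN
  have hdN : d < N := by omega
  have hNodd : Odd N := ⟨(d + 1) / 2, by omega⟩
  have hp' : ∀ j, 0 ≤ p j ∧ p j < 1 := hp
  have hq' : ∀ j, 0 ≤ q j ∧ q j < 1 := hq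
  set δ := dist p q with hδdef
  have hδ : 0 < δ := dist_pos.mpr hpq
  have hcoord : ∀ j, |p j - q j| ≤ δ := by
    intro j
    have h1 : dist (p j) (q j) ≤ dist p q := by
      rw [EuclideanSpace.dist_eq]
      have h2 : dist (p j) (q j) ^ 2 ≤ ∑ k, dist (p k) (q k) ^ 2 :=
        Finset.single_le_sum (f := fun k => dist (p k) (q k) ^ 2)
          (fun k _ => by positivity) (Finset.mem_univ j)
      calc dist (p j) (q j) = Real.sqrt (dist (p j) (q j) ^ 2) :=
            (Real.sqrt_sq dist_nonneg).symm
      _ ≤ _ := Real.sqrt_le_sqrt h2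
    rw [Real.dist_eq] at h1
    exact h1
  clear_value δ
  by_cases hbig : 1 ≤ (N:ℝ) * δ
  · -- large distance: the root cell `[0,2)^d` works
    refine ⟨0, Nat.zero_le _, 0, fun _ => 0, fun j => by norm_num, ?_, ?_, ?_⟩
    · intro j
      norm_num
      exact ⟨(hp' j).1, by linarith [(hp' j).2]⟩
    · intro j
      norm_num
      exact ⟨(hq' j).1, by linarith [(hq' j).2]⟩
    · norm_num [hNR]
      linarith
  · push_neg at hbig
    have hpos : 0 < (N:ℝ) * δ := by positivity
    obtain ⟨n, hn1, hn2⟩ := exists_mem_Ico_zpow hpos one_lt_two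
    have hnneg : n < 0 := by
      by_contra hc
      push_neg at hc
      have : (1:ℝ) ≤ 2 ^ n := one_le_zpow₀ (by norm_num) hc
      linarith
    set L : ℕ := (-(n+1)).toNat with hL
    have hLn : (L:ℤ) = -(n+1) := Int.toNat_of_nonneg (by omega)
    have h2L : ((2:ℝ) ^ (n+1)) = ((2:ℝ) ^ L)⁻¹ := by
      have he : (n + 1 : ℤ) = -(L:ℤ) := by omega
      rw [he, zpow_neg, zpow_natCast]
    have h2L0 : (0:ℝ) < 2 ^ L := by positivity
    have hq2 : (N:ℝ) * δ < ((2:ℝ) ^ L)⁻¹ := h2L ▸ hn2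
    have hsδ : (N:ℝ) * 2 ^ L * δ < 1 := by
      have h5 := mul_lt_mul_of_pos_right hq2 h2L0
      rw [inv_mul_cancel₀ (ne_of_gt h2L0)] at h5
      nlinarith
    -- the bad-shift predicate
    clear_value L
    obtain ⟨i, hiN, hgood⟩ := exists_good N d hdN
      (fun j i => (N:ℤ) ∣ ⌊(N:ℝ) * 2 ^ L * max (p j) (q j)⌋ + (i:ℤ) * 2 ^ L)
      (fun j i i' hi hi' h h' => quad_unique N L hNodd _ i i' hi hi' h h')
    have hiR : (i:ℝ) / N < 1 := by
      rw [div_lt_one hN']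
      exact_mod_cast hiN
    have ht0 : 0 ≤ (i:ℝ) / N := by positivity
    have hr0 : ∀ j, 0 ≤ (p j + (i:ℝ)/N) * 2 ^ L := fun j =>
      mul_nonneg (by linarith [(hp' j).1]) (le_of_lt h2L0)
    -- floors agree in every coordinate
    have hfl : ∀ j, ⌊(q j + (i:ℝ)/N) * 2 ^ L⌋ = ⌊(p j + (i:ℝ)/N) * 2 ^ L⌋ := by
      intro j
      by_contra hne
      apply hgood j
      rcases le_total (p j) (q j) with h | h
      · have hlen : (N : ℝ) * 2 ^ L * (q j - p j) < 1 := by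
          have h6 : q j - p j ≤ δ := by
            have h7 := hcoord j
            rw [abs_sub_comm] at h7
            linarith [le_abs_self (q j - p j), h7]
          nlinarith [mul_le_mul_of_nonneg_left h6 (le_of_lt (mul_pos hN' h2L0))]
        have := quad_key N L hN (p j) (q j) h hlen i (Ne.symm hne)
        rwa [max_eq_right h]
      · have hlen : (N : ℝ) * 2 ^ L * (p j - q j) < 1 := by
          have h6 : p j - q j ≤ δ := by
            linarith [le_abs_self (p j - q j), hcoord j]
          nlinarith [mul_le_mul_of_nonneg_left h6 (le_of_lt (mul_pos hN' h2L0))]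
        have := quad_key N L hN (q j) (p j) h hlen i hne
        rwa [max_eq_left h]
    have hpow : (2:ℝ) ^ ((1:ℤ) - ((L+1 : ℕ) : ℤ)) = ((2:ℝ) ^ L)⁻¹ := by
      rw [show (1:ℤ) - ((L+1:ℕ):ℤ) = -(L:ℤ) by push_cast; ring, zpow_neg, zpow_natCast]
    -- the cell indices
    refine ⟨i, by omega, L + 1, fun j => (⌊(p j + (i:ℝ)/N) * 2 ^ L⌋).toNat, ?_, ?_, ?_, ?_⟩
    · intro j
      show (⌊(p j + (i:ℝ)/N) * 2 ^ L⌋).toNat < 2 ^ (L + 1)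
      have h7 : ⌊(p j + (i:ℝ)/N) * 2 ^ L⌋ < ((2 ^ (L+1) : ℕ) : ℤ) := by
        rw [Int.floor_lt]
        have he : ((2:ℝ)) ^ (L+1) = 2 * 2 ^ L := by ring
        have he2 : (((2 ^ (L+1) : ℕ) : ℤ) : ℝ) = 2 * 2 ^ L := by push_cast; ring
        rw [he2]
        nlinarith [(hp' j).2, hiR, h2L0]
      have h8 : 0 ≤ ⌊(p j + (i:ℝ)/N) * 2 ^ L⌋ := Int.floor_nonneg.mpr (hr0 j)
      omega
    · -- p-membership
      intro j
      show (↑(⌊(p j + (i:ℝ)/N) * 2 ^ L⌋.toNat) : ℝ) * (2:ℝ) ^ ((1:ℤ) - ((L+1 : ℕ) : ℤ))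
          ≤ p j + (i:ℝ) / ((D:ℝ) + 1) ∧
        p j + (i:ℝ) / ((D:ℝ) + 1) <
          ((↑(⌊(p j + (i:ℝ)/N) * 2 ^ L⌋.toNat) : ℝ) + 1) * (2:ℝ) ^ ((1:ℤ) - ((L+1 : ℕ) : ℤ))
      have h8 : 0 ≤ ⌊(p j + (i:ℝ)/N) * 2 ^ L⌋ := Int.floor_nonneg.mpr (hr0 j)
      have hcast : ((⌊(p j + (i:ℝ)/N) * 2 ^ L⌋.toNat : ℕ) : ℝ)
          = ((⌊(p j + (i:ℝ)/N) * 2 ^ L⌋ : ℤ) : ℝ) := by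
        exact_mod_cast Int.toNat_of_nonneg h8
      rw [hNR, hpow, hcast]
      constructor
      · rw [← div_eq_mul_inv, div_le_iff₀ h2L0]
        exact Int.floor_le _
      · rw [← div_eq_mul_inv, lt_div_iff₀ h2L0]
        exact Int.lt_floor_add_one _
    · -- q-membership
      intro j
      show (↑(⌊(p j + (i:ℝ)/N) * 2 ^ L⌋.toNat) : ℝ) * (2:ℝ) ^ ((1:ℤ) - ((L+1 : ℕ) : ℤ))
          ≤ q j + (i:ℝ) / ((D:ℝ) + 1) ∧
        q j + (i:ℝ) / ((D:ℝ) + 1) <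
          ((↑(⌊(p j + (i:ℝ)/N) * 2 ^ L⌋.toNat) : ℝ) + 1) * (2:ℝ) ^ ((1:ℤ) - ((L+1 : ℕ) : ℤ))
      have h8 : 0 ≤ ⌊(p j + (i:ℝ)/N) * 2 ^ L⌋ := Int.floor_nonneg.mpr (hr0 j)
      have hcast : ((⌊(p j + (i:ℝ)/N) * 2 ^ L⌋.toNat : ℕ) : ℝ)
          = ((⌊(q j + (i:ℝ)/N) * 2 ^ L⌋ : ℤ) : ℝ) := by
        rw [hfl j]
        exact_mod_cast Int.toNat_of_nonneg h8
      rw [hNR, hpow, hcast]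
      constructor
      · rw [← div_eq_mul_inv, div_le_iff₀ h2L0]
        exact Int.floor_le _
      · rw [← div_eq_mul_inv, lt_div_iff₀ h2L0]
        exact Int.lt_floor_add_one _
    · -- side length bound
      rw [hNR, hpow]
      calc ((2:ℝ) ^ L)⁻¹ = 2 ^ (n + 1) := h2L.symm
      _ = 2 ^ n * 2 := zpow_add_one₀ two_ne_zero n
      _ ≤ (N:ℝ) * δ * 2 := by nlinarith
      _ = 2 * (N:ℝ) * δ := by ring
end

section
/- Let d ≥ 1, ε ∈ (0, 1/2), let R and B be nonempty finite disjoint subsets of [0,1)^d, and let P = R ∪ B. Suppose Π is a set of linear orders on [0,1)^d such that for every two distinct points p, q ∈ [0,1)^d there is σ ∈ Π that is (ε/4, 1/8)-local for p and q. Then there exist r ∈ R and b ∈ B that are joined by an edge of the locality graph L(P, Π) and satisfy ‖r − b‖ ≤ (1+ε) · min{‖r' − b'‖ : r' ∈ R, b' ∈ B}. -/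
open Metric Set

/-- `σ` is `(ε,γ)`-local for the (ordered) pair `p ≺_σ q`: every point of the
domain strictly between `p` and `q` in `σ` is within `ε·‖p−q‖` of the segment
`[p,q]` and within `γ·‖p−q‖` of `p` or `q`. -/
def GapLocal (d : ℕ) (σ : LinOrderOn (Pt d)) (ε γ : ℝ) (p q : Pt d) : Prop :=
  σ.lt p q ∧
  ∀ u ∈ σ.dom, σ.lt p u → σ.lt u q →
    Metric.infDist u (segment ℝ p q) ≤ ε * dist p q ∧
    min (dist u p) (dist u q) ≤ γ * dist p q

/-- `x` and `y` are joined by an edge of the locality graph `L(P, Ors)`: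
they are distinct points of `P` that are consecutive in the restriction to
`P` of some order of `Ors`. -/
def LocEdge (d : ℕ) (P : Set (Pt d)) (Ors : Set (LinOrderOn (Pt d))) (x y : Pt d) : Prop :=
  x ∈ P ∧ y ∈ P ∧ x ≠ y ∧
  ∃ σ ∈ Ors, ∀ z ∈ P, ¬(σ.lt x z ∧ σ.lt z y) ∧ ¬(σ.lt y z ∧ σ.lt z x)

/-- A maximal element for an irreflexive transitive relation on a finite nonempty set. -/
lemma exists_max_rel {α : Type*} (lt : α → α → Prop) (s : Set α) (hs : s.Finite)
    (hne : s.Nonempty)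
    (htr : ∀ x ∈ s, ∀ y ∈ s, ∀ z ∈ s, lt x y → lt y z → lt x z)
    (hirr : ∀ x ∈ s, ¬ lt x x) :
    ∃ x ∈ s, ∀ y ∈ s, ¬ lt x y := by
  classical
  lift s to Finset α using hs
  revert hne htr hirr
  refine Finset.induction_on s ?_ ?_
  · intro hne _ _
    simp at hne
  · intro a t ha ih hne htr hirr
    by_cases hte : (t : Set α).Nonempty
    · obtain ⟨m, hm, hmax⟩ := ih hte
        (fun x hx y hy z hz => htr x (by simp [hx]) y (by simp [hy]) z (by simp [hz]))
        (fun x hx => hirr x (by simp [hx]))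
      have hma : a ∈ (insert a t : Finset α) := Finset.mem_insert_self a t
      by_cases hlt : lt m a
      · refine ⟨a, by simp, ?_⟩
        intro y hy
        simp only [Finset.coe_insert, Set.mem_insert_iff] at hy
        rcases hy with h | hy
        · rw [h]
          exact hirr a (by simp)
        · intro hay
          exact hmax y hy (htr m (by simp [hm]) a (by simp) y (by simp [hy]) hlt hay)
      · refine ⟨m, by simp [hm], ?_⟩
        intro y hy
        simp only [Finset.coe_insert, Set.mem_insert_iff] at hy
        rcases hy with h | hy
        · rw [h]
          exact hlt
        · exact hmax y hy
    · have : t = ∅ := by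
        rcases Finset.eq_empty_or_nonempty t with h | h
        · exact h
        · exact absurd (by exact_mod_cast h.to_set) hte
      subst this
      refine ⟨a, by simp, ?_⟩
      intro y hy
      simp only [Finset.coe_insert, Finset.coe_empty, Set.mem_insert_iff,
        Set.mem_empty_iff_false, or_false] at hy
      rw [hy]
      exact hirr a (by simp)

/-- two points of a segment are at distance at most the length of the segment. -/
lemma dist_le_of_mem_seg {d : ℕ} {p q c e : Pt d}
    (hc : c ∈ segment ℝ p q) (he : e ∈ segment ℝ p q) : dist c e ≤ dist p q := by
  obtain ⟨a, b, ha, hb, hab, rfl⟩ := hc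
  obtain ⟨a', b', ha', hb', hab', rfl⟩ := he
  have key : (a • p + b • q) - (a' • p + b' • q) = (b - b') • (q - p) := by
    have h1 : a = 1 - b := by linarith
    have h2 : a' = 1 - b' := by linarith
    subst h1 h2
    simp only [sub_smul, one_smul, smul_sub]
    abel
  rw [dist_eq_norm, key, norm_smul]
  have hb1 : b ≤ 1 := by linarith
  have hb1' : b' ≤ 1 := by linarith
  have habs : |b - b'| ≤ 1 := abs_le.mpr ⟨by linarith, by linarith⟩
  calc |b - b'| * ‖q - p‖ ≤ 1 * ‖q - p‖ :=
        mul_le_mul_of_nonneg_right habs (norm_nonneg _)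
    _ = dist p q := by rw [one_mul, ← dist_eq_norm, dist_comm]

lemma isCompact_seg {d : ℕ} (p q : Pt d) : IsCompact (segment ℝ p q) := by
  rw [segment_eq_image]
  exact isCompact_Icc.image <|
    ((continuous_const.sub continuous_id).smul continuous_const).add
      (continuous_id.smul continuous_const)

/-- Key lemma: given a local order for a closest bichromatic pair `(p, q)`,
there is a consecutive bichromatic pair at distance at most `(1+ε)·dist p q`. -/
lemma key_lemma {d : ℕ} {ε : ℝ} (hε : 0 < ε) (C D : Set (Pt d))
    (hCfin : C.Finite) (hDfin : D.Finite) (hdisj : Disjoint C D)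
    (hC : C ⊆ unitCube d) (hD : D ⊆ unitCube d)
    (σ : LinOrderOn (Pt d)) (hσdom : σ.dom = unitCube d)
    (p q : Pt d) (hp : p ∈ C) (hq : q ∈ D)
    (hgl : GapLocal d σ (ε / 4) (1 / 8) p q) :
    ∃ x ∈ C, ∃ y ∈ D, x ≠ y ∧
      (∀ z ∈ C ∪ D, ¬(σ.lt x z ∧ σ.lt z y) ∧ ¬(σ.lt y z ∧ σ.lt z x)) ∧
      dist x y ≤ (1 + ε) * dist p q := by
  obtain ⟨hpq, hbet⟩ := hgl
  set P : Set (Pt d) := C ∪ D with hP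
  have hPfin : P.Finite := hCfin.union hDfin
  have hPc : P ⊆ unitCube d := union_subset hC hD
  have hPdom : ∀ z ∈ P, z ∈ σ.dom := fun z hz => hσdom ▸ hPc hz
  have hpP : p ∈ P := Or.inl hp
  have hqP : q ∈ P := Or.inr hq
  -- the chain S
  set S : Set (Pt d) := {z ∈ P | (z = p ∨ σ.lt p z) ∧ (z = q ∨ σ.lt z q)} with hS
  have hSP : S ⊆ P := fun z hz => hz.1
  have hSdom : ∀ z ∈ S, z ∈ σ.dom := fun z hz => hPdom z (hSP hz)
  have hpS : p ∈ S := ⟨hpP, Or.inl rfl, Or.inr hpq⟩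
  have hqS : q ∈ S := ⟨hqP, Or.inr hpq, Or.inl rfl⟩
  have hSfin : S.Finite := hPfin.subset hSP
  have htrS : ∀ x ∈ S, ∀ y ∈ S, ∀ z ∈ S, σ.lt x y → σ.lt y z → σ.lt x z :=
    fun x hx y hy z hz => σ.trans x (hSdom x hx) y (hSdom y hy) z (hSdom z hz)
  have hirrS : ∀ x ∈ S, ¬ σ.lt x x := fun x hx => σ.irrefl x (hSdom x hx)
  -- maximal C-point of S
  set M : Set (Pt d) := {z ∈ S | z ∈ C} with hM
  have hMfin : M.Finite := hSfin.subset fun z hz => hz.1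
  obtain ⟨x, hxM, hxmax⟩ := exists_max_rel σ.lt M hMfin ⟨p, hpS, hp⟩
    (fun a ha b hb c hc => htrS a ha.1 b hb.1 c hc.1)
    (fun a ha => hirrS a ha.1)
  obtain ⟨hxS, hxC⟩ := hxM
  have hxq : x ≠ q := fun h => (disjoint_left.mp hdisj hxC) (h ▸ hq)
  have hxltq : σ.lt x q := by
    rcases hxS.2.2 with h | h
    · exact absurd h hxq
    · exact h
  -- minimal successor of x in S
  set Y : Set (Pt d) := {z ∈ S | σ.lt x z} with hY
  have hYfin : Y.Finite := hSfin.subset fun z hz => hz.1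
  have hqY : q ∈ Y := ⟨hqS, hxltq⟩
  obtain ⟨y, hyY, hymin⟩ := exists_max_rel (fun a b => σ.lt b a) Y hYfin ⟨q, hqY⟩
    (fun a ha b hb c hc hab hbc => htrS c hc.1 b hb.1 a ha.1 hbc hab)
    (fun a ha => hirrS a ha.1)
  obtain ⟨hyS, hxlty⟩ := hyY
  -- y is in D
  have hyD : y ∈ D := by
    rcases hSP hyS with hyC | hyD
    · exact absurd hxlty (hxmax y ⟨hyS, hyC⟩)
    · exact hyD
  have hxy : x ≠ y := fun h => (disjoint_left.mp hdisj hxC) (h ▸ hyD)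
  refine ⟨x, hxC, y, hyD, hxy, ?_, ?_⟩
  · -- consecutiveness in P
    intro z hzP
    constructor
    · rintro ⟨hxz, hzy⟩
      -- z is in S hence in Y, contradicting minimality of y
      have hpz : z = p ∨ σ.lt p z := by
        rcases hxS.2.1 with h | h
        · exact Or.inr (h ▸ hxz)
        · exact Or.inr (σ.trans p (hPdom p hpP) x (hSdom x hxS) z (hPdom z hzP) h hxz)
      have hzq : z = q ∨ σ.lt z q := by
        rcases hyS.2.2 with h | h
        · exact Or.inr (h ▸ hzy)
        · exact Or.inr (σ.trans z (hPdom z hzP) y (hSdom y hyS) q (hPdom q hqP) hzy h)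
      have hzS : z ∈ S := ⟨hzP, hpz, hzq⟩
      exact hymin z ⟨hzS, hxz⟩ hzy
    · rintro ⟨hyz, hzx⟩
      have : σ.lt x x := σ.trans x (hSdom x hxS) z (hPdom z hzP) x (hSdom x hxS)
        (σ.trans x (hSdom x hxS) y (hSdom y hyS) z (hPdom z hzP) hxlty hyz) hzx
      exact hirrS x hxS this
  · -- distance bound
    have hℓ : 0 < dist p q := dist_pos.mpr fun h => (disjoint_left.mp hdisj hp) (h ▸ hq)
    have hnear : ∀ u ∈ S, ∃ c ∈ segment ℝ p q, dist u c ≤ ε / 4 * dist p q := by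
      intro u huS
      by_cases hup : u = p
      · exact ⟨p, left_mem_segment ℝ p q, by
          rw [hup, dist_self]; positivity⟩
      by_cases huq : u = q
      · exact ⟨q, right_mem_segment ℝ p q, by
          rw [huq, dist_self]; positivity⟩
      have hpu : σ.lt p u := (huS.2.1).resolve_left hup
      have huq' : σ.lt u q := (huS.2.2).resolve_left huq
      have hinf := (hbet u (hSdom u huS) hpu huq').1
      obtain ⟨c, hc, hcd⟩ := (isCompact_seg p q).exists_infDist_eq_dist
        ⟨p, left_mem_segment ℝ p q⟩ u
      exact ⟨c, hc, by rw [← hcd]; exact hinf⟩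
    obtain ⟨cx, hcx, hcxd⟩ := hnear x hxS
    obtain ⟨cy, hcy, hcyd⟩ := hnear y hyS
    have h1 : dist x y ≤ dist x cx + dist cx cy + dist cy y := dist_triangle4 x cx cy y
    have h2 : dist cx cy ≤ dist p q := dist_le_of_mem_seg hcx hcy
    have h3 : dist cy y = dist y cy := dist_comm cy y
    nlinarith [hcxd, hcyd]

theorem stmt_11 (d : ℕ) (hd : 1 ≤ d) (ε : ℝ) (hε : 0 < ε) (hε2 : ε < 1 / 2)
    (R B : Set (Pt d)) (hRfin : R.Finite) (hBfin : B.Finite)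
    (hRne : R.Nonempty) (hBne : B.Nonempty) (hdisj : Disjoint R B)
    (hRc : R ⊆ unitCube d) (hBc : B ⊆ unitCube d)
    (Ors : Set (LinOrderOn (Pt d))) (hdom : ∀ σ ∈ Ors, σ.dom = unitCube d)
    (hloc : ∀ p ∈ unitCube d, ∀ q ∈ unitCube d, p ≠ q →
      ∃ σ ∈ Ors, GapLocal d σ (ε / 4) (1 / 8) p q ∨ GapLocal d σ (ε / 4) (1 / 8) q p) :
    ∃ r ∈ R, ∃ b ∈ B, LocEdge d (R ∪ B) Ors r b ∧
      ∀ r' ∈ R, ∀ b' ∈ B, dist r b ≤ (1 + ε) * dist r' b' := by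
  -- closest bichromatic pair
  obtain ⟨⟨r₀, b₀⟩, hmem, hmin⟩ := Set.exists_min_image (R ×ˢ B)
    (fun pr => dist pr.1 pr.2) (hRfin.prod hBfin) (hRne.prod hBne)
  obtain ⟨hr₀, hb₀⟩ := hmem
  have hne : r₀ ≠ b₀ := fun h => (disjoint_left.mp hdisj hr₀) (h ▸ hb₀)
  obtain ⟨σ, hσ, hgl⟩ := hloc r₀ (hRc hr₀) b₀ (hBc hb₀) hne
  have h1ε : (0:ℝ) ≤ 1 + ε := by linarith
  have hminle : ∀ r' ∈ R, ∀ b' ∈ B, dist r₀ b₀ ≤ dist r' b' := by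
    intro r' hr' b' hb'
    exact hmin (r', b') ⟨hr', hb'⟩
  rcases hgl with hgl | hgl
  · obtain ⟨x, hx, y, hy, hxy, hcons, hdist⟩ := key_lemma hε R B hRfin hBfin hdisj
      hRc hBc σ (hdom σ hσ) r₀ b₀ hr₀ hb₀ hgl
    refine ⟨x, hx, y, hy, ⟨Or.inl hx, Or.inr hy, hxy, σ, hσ, hcons⟩, ?_⟩
    intro r' hr' b' hb'
    calc dist x y ≤ (1 + ε) * dist r₀ b₀ := hdist
      _ ≤ (1 + ε) * dist r' b' := mul_le_mul_of_nonneg_left (hminle r' hr' b' hb') h1ε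
  · obtain ⟨x, hx, y, hy, hxy, hcons, hdist⟩ := key_lemma hε B R hBfin hRfin hdisj.symm
      hBc hRc σ (hdom σ hσ) b₀ r₀ hb₀ hr₀ hgl
    refine ⟨y, hy, x, hx, ⟨Or.inl hy, Or.inr hx, hxy.symm, σ, hσ, ?_⟩, ?_⟩
    · intro z hz
      have hz' : z ∈ B ∪ R := hz.symm
      exact ⟨(hcons z hz').2, (hcons z hz').1⟩
    · intro r' hr' b' hb'
      calc dist y x = dist x y := dist_comm y x
        _ ≤ (1 + ε) * dist b₀ r₀ := hdist
        _ = (1 + ε) * dist r₀ b₀ := by rw [dist_comm]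
        _ ≤ (1 + ε) * dist r' b' := mul_le_mul_of_nonneg_left (hminle r' hr' b' hb') h1ε
end

section
/- Let d ≥ 1, ε ∈ (0,1), and let P ⊆ [0,1)^d be a finite set. Suppose Π is a set of linear orders on [0,1)^d such that for every two distinct points p, q ∈ [0,1)^d there is σ ∈ Π that is (ε/32, 1/8)-local for p and q. Then the locality graph L(P, Π), with each edge xy weighted by ‖x − y‖, is a (1+ε)-spanner of P: for all p, q ∈ P, the graph distance satisfies d_L(p, q) ≤ (1+ε)·‖p − q‖. -/
open Metric Set

theorem relMinExists {α : Type*} (r : α → α → Prop) :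
    ∀ s : Finset α, (∀ a ∈ s, ¬ r a a) →
    (∀ a ∈ s, ∀ b ∈ s, ∀ c ∈ s, r a b → r b c → r a c) →
    s.Nonempty → ∃ m ∈ s, ∀ z ∈ s, ¬ r z m := by
  classical
  intro s
  induction s using Finset.induction with
  | empty => intro _ _ h; simpa using h
  | @insert a t hat ih =>
    intro hirr htr _
    have hsub : ∀ x ∈ t, x ∈ insert a t := fun x hx => Finset.mem_insert_of_mem hx
    rcases t.eq_empty_or_nonempty with rfl | htne
    · refine ⟨a, Finset.mem_insert_self _ _, ?_⟩
      intro z hz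
      have hz' : z = a := by simpa using hz
      subst hz'
      exact hirr z (Finset.mem_insert_self _ _)
    · obtain ⟨m, hm, hmin⟩ := ih (fun x hx => hirr x (hsub x hx))
        (fun x hx y hy z hz => htr x (hsub x hx) y (hsub y hy) z (hsub z hz)) htne
      by_cases hram : r a m
      · refine ⟨a, Finset.mem_insert_self _ _, ?_⟩
        intro z hz hza
        rcases Finset.mem_insert.1 hz with rfl | hzt
        · exact hirr z (Finset.mem_insert_self _ _) hza
        · exact hmin z hzt
            (htr z (hsub z hzt) a (Finset.mem_insert_self _ _) m (hsub m hm) hza hram)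
      · refine ⟨m, hsub m hm, ?_⟩
        intro z hz hzm
        rcases Finset.mem_insert.1 hz with rfl | hzt
        · exact hram hzm
        · exact hmin z hzt hzm

theorem geoKey {d : ℕ} (p q u v : Pt d) (δ : ℝ) (hδ0 : 0 ≤ δ) (hpq : p ≠ q)
    (hu : Metric.infDist u (segment ℝ p q) ≤ δ)
    (hv : Metric.infDist v (segment ℝ p q) ≤ δ)
    (ha : dist u p ≤ dist p q / 8) (hb : dist v q ≤ dist p q / 8)
    (hδ : δ ≤ dist p q / 32) :
    dist u v ≤ dist p q - dist u p - dist v q + 4 * δ := by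
  have hℓ : 0 < dist p q := dist_pos.2 hpq
  have hcs : IsCompact (segment ℝ p q) := by
    rw [segment_eq_image']
    exact isCompact_Icc.image (by continuity)
  have hns : (segment ℝ p q).Nonempty := ⟨p, left_mem_segment ℝ p q⟩
  obtain ⟨x, hxseg, hux⟩ := hcs.exists_infDist_eq_dist hns u
  obtain ⟨y, hyseg, hvy⟩ := hcs.exists_infDist_eq_dist hns v
  rw [segment_eq_image'] at hxseg hyseg
  obtain ⟨s, hs, rfl⟩ := hxseg
  obtain ⟨t, ht, rfl⟩ := hyseg
  simp only [Set.mem_Icc] at hs ht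
  have hux' : dist u (p + s • (q - p)) ≤ δ := by rw [← hux]; exact hu
  have hvy' : dist v (p + t • (q - p)) ≤ δ := by rw [← hvy]; exact hv
  have hnorm : ‖q - p‖ = dist p q := by rw [dist_eq_norm']
  have e1 : dist p (p + s • (q - p)) = s * dist p q := by
    rw [dist_eq_norm]
    have h : p - (p + s • (q - p)) = (-s) • (q - p) := by module
    rw [h, norm_smul, Real.norm_eq_abs, abs_neg, abs_of_nonneg hs.1, hnorm]
  have e2 : dist (p + t • (q - p)) q = (1 - t) * dist p q := by
    rw [dist_eq_norm]
    have h : (p + t • (q - p)) - q = (1 - t) • (p - q) := by module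
    rw [h, norm_smul, Real.norm_eq_abs, abs_of_nonneg (by linarith [ht.2] : (0:ℝ) ≤ 1 - t),
      ← dist_eq_norm]
  have e3 : dist (p + s • (q - p)) (p + t • (q - p)) = |t - s| * dist p q := by
    rw [dist_eq_norm]
    have h : (p + s • (q - p)) - (p + t • (q - p)) = (s - t) • (q - p) := by module
    rw [h, norm_smul, Real.norm_eq_abs, hnorm, abs_sub_comm]
  have hb1 : s * dist p q ≤ dist p q / 8 + δ := by
    rw [← e1]
    calc dist p (p + s • (q - p)) ≤ dist p u + dist u (p + s • (q - p)) := dist_triangle _ _ _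
      _ ≤ dist p q / 8 + δ := by rw [dist_comm p u]; exact add_le_add ha hux'
  have hb2 : (1 - t) * dist p q ≤ dist p q / 8 + δ := by
    rw [← e2]
    calc dist (p + t • (q - p)) q ≤ dist (p + t • (q - p)) v + dist v q := dist_triangle _ _ _
      _ ≤ δ + dist p q / 8 := add_le_add (by rw [dist_comm]; exact hvy') hb
      _ = dist p q / 8 + δ := by ring
  have hst : s ≤ t := by
    by_contra hcon
    push_neg at hcon
    have hpos : 0 < (s - t) * dist p q := mul_pos (by linarith) hℓ
    nlinarith
  have habs : |t - s| = t - s := abs_of_nonneg (by linarith)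
  rw [habs] at e3
  have hl1 : dist u p - δ ≤ s * dist p q := by
    rw [← e1]
    have h := dist_triangle u (p + s • (q - p)) p
    have h2 : dist (p + s • (q - p)) p = dist p (p + s • (q - p)) := dist_comm _ _
    linarith
  have hl2 : dist v q - δ ≤ (1 - t) * dist p q := by
    rw [← e2]
    have h := dist_triangle v (p + t • (q - p)) q
    linarith
  have h4 := dist_triangle4 u (p + s • (q - p)) (p + t • (q - p)) v
  rw [e3] at h4
  have h5 : dist (p + t • (q - p)) v ≤ δ := by rw [dist_comm]; exact hvy'
  nlinarith

theorem locEdgeSymm {d : ℕ} {P : Set (Pt d)} {Ors : Set (LinOrderOn (Pt d))} {x y : Pt d}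
    (h : LocEdge d P Ors x y) : LocEdge d P Ors y x := by
  obtain ⟨h1, h2, h3, σ, hσ, h4⟩ := h
  exact ⟨h2, h1, h3.symm, σ, hσ, fun z hz => ⟨(h4 z hz).2, (h4 z hz).1⟩⟩

theorem stepLemma {d : ℕ} (ε : ℝ) (hε : 0 < ε) (hε1 : ε < 1)
    (P : Set (Pt d)) (hPfin : P.Finite) (hPc : P ⊆ unitCube d)
    (Ors : Set (LinOrderOn (Pt d))) (σ : LinOrderOn (Pt d)) (hσ : σ ∈ Ors)
    (hdomσ : σ.dom = unitCube d)
    (p q : Pt d) (hp : p ∈ P) (hq : q ∈ P) (hpq : p ≠ q)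
    (hgl : GapLocal d σ (ε / 32) (1 / 8) p q) :
    ∃ x y, LocEdge d P Ors x y ∧ dist x p ≤ dist p q / 8 ∧ dist y q ≤ dist p q / 8 ∧
      dist x y ≤ dist p q - dist x p - dist y q + (ε / 8) * dist p q := by
  classical
  obtain ⟨hplq, hbet⟩ := hgl
  have hℓ : 0 < dist p q := dist_pos.2 hpq
  have hdomP : ∀ z ∈ P, z ∈ σ.dom := fun z hz => by rw [hdomσ]; exact hPc hz
  set F := hPfin.toFinset with hF
  have hmemF : ∀ z, z ∈ F ↔ z ∈ P := fun z => hPfin.mem_toFinset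
  set S : Finset (Pt d) := F.filter (fun z => z = p ∨ z = q ∨ (σ.lt p z ∧ σ.lt z q)) with hS
  have hSP : ∀ z ∈ S, z ∈ P := fun z hz => (hmemF z).1 (Finset.mem_filter.1 hz).1
  have hSdom : ∀ z ∈ S, z ∈ σ.dom := fun z hz => hdomP z (hSP z hz)
  have hScase : ∀ z ∈ S, z = p ∨ z = q ∨ (σ.lt p z ∧ σ.lt z q) :=
    fun z hz => (Finset.mem_filter.1 hz).2
  have hpS : p ∈ S := Finset.mem_filter.2 ⟨(hmemF p).2 hp, Or.inl rfl⟩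
  have hqS : q ∈ S := Finset.mem_filter.2 ⟨(hmemF q).2 hq, Or.inr (Or.inl rfl)⟩
  set A : Finset (Pt d) := S.filter (fun z => dist z p ≤ dist p q / 8) with hA
  have hpA : p ∈ A := Finset.mem_filter.2 ⟨hpS, by simp only [dist_self]; positivity⟩
  have hAS : ∀ z ∈ A, z ∈ S := fun z hz => (Finset.mem_filter.1 hz).1
  obtain ⟨x, hxA, hxmax⟩ := relMinExists (fun a b => σ.lt b a) A
    (fun a ha => σ.irrefl a (hSdom a (hAS a ha)))
    (fun a ha b hb c hc hab hbc =>
      σ.trans c (hSdom c (hAS c hc)) b (hSdom b (hAS b hb)) a (hSdom a (hAS a ha)) hbc hab)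
    ⟨p, hpA⟩
  have hxS : x ∈ S := hAS x hxA
  have hxP : x ∈ P := hSP x hxS
  have hxdom : x ∈ σ.dom := hdomP x hxP
  have hxp8 : dist x p ≤ dist p q / 8 := (Finset.mem_filter.1 hxA).2
  have hxq : x ≠ q := by
    intro h
    rw [h, dist_comm] at hxp8
    linarith
  have hxltq : σ.lt x q := by
    rcases hScase x hxS with rfl | h | h
    · exact hplq
    · exact absurd h hxq
    · exact h.2
  set T : Finset (Pt d) := S.filter (fun z => σ.lt x z) with hT
  have hqT : q ∈ T := Finset.mem_filter.2 ⟨hqS, hxltq⟩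
  have hTS : ∀ z ∈ T, z ∈ S := fun z hz => (Finset.mem_filter.1 hz).1
  obtain ⟨y, hyT, hymin⟩ := relMinExists σ.lt T
    (fun a ha => σ.irrefl a (hSdom a (hTS a ha)))
    (fun a ha b hb c hc hab hbc =>
      σ.trans a (hSdom a (hTS a ha)) b (hSdom b (hTS b hb)) c (hSdom c (hTS c hc)) hab hbc)
    ⟨q, hqT⟩
  have hyS : y ∈ S := hTS y hyT
  have hyP : y ∈ P := hSP y hyS
  have hydom : y ∈ σ.dom := hdomP y hyP
  have hxy : σ.lt x y := (Finset.mem_filter.1 hyT).2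
  have hynp : ¬ dist y p ≤ dist p q / 8 := by
    intro h
    exact hxmax y (Finset.mem_filter.2 ⟨hyS, h⟩) hxy
  have hynep : y ≠ p := by
    intro h
    exact hynp (by rw [h, dist_self]; positivity)
  have hyq8 : dist y q ≤ dist p q / 8 := by
    rcases hScase y hyS with h | rfl | h
    · exact absurd h hynep
    · rw [dist_self]; positivity
    · have hmin := (hbet y hydom h.1 h.2).2
      rcases min_le_iff.1 hmin with h' | h'
      · exact absurd (by linarith : dist y p ≤ dist p q / 8) hynp
      · linarith
  have hxney : x ≠ y := by
    intro h
    rw [h] at hxy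
    exact σ.irrefl y hydom hxy
  have hedge : LocEdge d P Ors x y := by
    refine ⟨hxP, hyP, hxney, σ, hσ, fun z hz => ⟨?_, ?_⟩⟩
    · rintro ⟨h1, h2⟩
      have hzdom : z ∈ σ.dom := hdomP z hz
      have hpz : σ.lt p z := by
        rcases hScase x hxS with rfl | h | h
        · exact h1
        · exact absurd h hxq
        · exact σ.trans p (hdomP p hp) x hxdom z hzdom h.1 h1
      have hzq : σ.lt z q := by
        rcases hScase y hyS with h | rfl | h
        · exact absurd h hynep
        · exact h2
        · exact σ.trans z hzdom y hydom q (hdomP q hq) h2 h.2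
      have hzS : z ∈ S := Finset.mem_filter.2 ⟨(hmemF z).2 hz, Or.inr (Or.inr ⟨hpz, hzq⟩)⟩
      exact hymin z (Finset.mem_filter.2 ⟨hzS, h1⟩) h2
    · rintro ⟨h1, h2⟩
      have hzdom : z ∈ σ.dom := hdomP z hz
      have hyx : σ.lt y x := σ.trans y hydom z hzdom x hxdom h1 h2
      have hxx : σ.lt x x := σ.trans x hxdom y hydom x hxdom hxy hyx
      exact σ.irrefl x hxdom hxx
  have hδ0 : (0:ℝ) ≤ ε / 32 * dist p q := by positivity
  have hix : Metric.infDist x (segment ℝ p q) ≤ ε / 32 * dist p q := by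
    rcases hScase x hxS with rfl | h | h
    · calc Metric.infDist x (segment ℝ x q) ≤ dist x x :=
          Metric.infDist_le_dist_of_mem (left_mem_segment ℝ x q)
        _ ≤ _ := by rw [dist_self]; exact hδ0
    · exact absurd h hxq
    · exact (hbet x hxdom h.1 h.2).1
  have hiy : Metric.infDist y (segment ℝ p q) ≤ ε / 32 * dist p q := by
    rcases hScase y hyS with h | rfl | h
    · exact absurd h hynep
    · calc Metric.infDist y (segment ℝ p y) ≤ dist y y :=
          Metric.infDist_le_dist_of_mem (right_mem_segment ℝ p y)
        _ ≤ _ := by rw [dist_self]; exact hδ0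
    · exact (hbet y hydom h.1 h.2).1
  have hgeo := geoKey p q x y (ε / 32 * dist p q) hδ0 hpq hix hiy hxp8 hyq8
    (by nlinarith)
  exact ⟨x, y, hedge, hxp8, hyq8, by linarith⟩

theorem pathAppend {d : ℕ} (E : Pt d → Pt d → Prop) (a b c : Pt d)
    (n1 n2 : ℕ) (f1 f2 : ℕ → Pt d)
    (h10 : f1 0 = a) (h11 : f1 n1 = b) (h20 : f2 0 = b) (h21 : f2 n2 = c)
    (he1 : ∀ i < n1, E (f1 i) (f1 (i + 1)))
    (he2 : ∀ i < n2, E (f2 i) (f2 (i + 1))) :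
    ∃ f : ℕ → Pt d, f 0 = a ∧ f (n1 + n2) = c ∧
      (∀ i < n1 + n2, E (f i) (f (i + 1))) ∧
      ∑ i ∈ Finset.range (n1 + n2), dist (f i) (f (i + 1)) =
        (∑ i ∈ Finset.range n1, dist (f1 i) (f1 (i + 1))) +
        ∑ i ∈ Finset.range n2, dist (f2 i) (f2 (i + 1)) := by
  classical
  set f : ℕ → Pt d := fun i => if i < n1 then f1 i else f2 (i - n1) with hf
  have hfl : ∀ i < n1, f i = f1 i := fun i hi => if_pos hi
  have hfr : ∀ j, f (n1 + j) = f2 j := by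
    intro j
    have h : ¬ n1 + j < n1 := by omega
    simp only [hf, if_neg h]
    rw [show n1 + j - n1 = j by omega]
  have hflr : ∀ i ≤ n1, f i = f1 i := by
    intro i hi
    rcases lt_or_eq_of_le hi with h | rfl
    · exact hfl i h
    · have h0 : f i = f2 0 := by simpa using hfr 0
      rw [h0, h20, h11]
  have hstep1 : ∀ i < n1, f i = f1 i ∧ f (i + 1) = f1 (i + 1) :=
    fun i hi => ⟨hfl i hi, hflr (i + 1) hi⟩
  refine ⟨f, ?_, ?_, ?_, ?_⟩
  · exact (hflr 0 (Nat.zero_le _)).trans h10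
  · exact (hfr n2).trans h21
  · intro i hi
    by_cases hi1 : i < n1
    · obtain ⟨e1, e2⟩ := hstep1 i hi1
      rw [e1, e2]
      exact he1 i hi1
    · push_neg at hi1
      obtain ⟨j, rfl⟩ : ∃ j, i = n1 + j := ⟨i - n1, by omega⟩
      rw [hfr j, show n1 + j + 1 = n1 + (j + 1) by ring, hfr (j + 1)]
      exact he2 j (by omega)
  · rw [Finset.sum_range_add]
    congr 1
    · apply Finset.sum_congr rfl
      intro i hi
      obtain ⟨e1, e2⟩ := hstep1 i (Finset.mem_range.1 hi)
      rw [e1, e2]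
    · apply Finset.sum_congr rfl
      intro j _
      rw [show n1 + j + 1 = n1 + (j + 1) by ring, hfr j, hfr (j + 1)]

theorem stmt_12 (d : ℕ) (hd : 1 ≤ d) (ε : ℝ) (hε : 0 < ε) (hε1 : ε < 1)
    (P : Set (Pt d)) (hPfin : P.Finite) (hPc : P ⊆ unitCube d)
    (Ors : Set (LinOrderOn (Pt d))) (hdom : ∀ σ ∈ Ors, σ.dom = unitCube d)
    (hloc : ∀ p ∈ unitCube d, ∀ q ∈ unitCube d, p ≠ q →
      ∃ σ ∈ Ors, GapLocal d σ (ε / 32) (1 / 8) p q ∨ GapLocal d σ (ε / 32) (1 / 8) q p) :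
    ∀ p ∈ P, ∀ q ∈ P,
      ∃ (n : ℕ) (f : ℕ → Pt d), f 0 = p ∧ f n = q ∧
        (∀ i < n, LocEdge d P Ors (f i) (f (i + 1))) ∧
        ∑ i ∈ Finset.range n, dist (f i) (f (i + 1)) ≤ (1 + ε) * dist p q := by
  classical
  set F := hPfin.toFinset with hF
  have hmemF : ∀ z, z ∈ F ↔ z ∈ P := fun z => hPfin.mem_toFinset
  set D : Finset ℝ := (F ×ˢ F).image (fun z => dist z.1 z.2) with hD
  have hkey : ∀ n : ℕ, ∀ p ∈ P, ∀ q ∈ P,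
      (D.filter (fun r => r < dist p q)).card < n →
      ∃ (n' : ℕ) (f : ℕ → Pt d), f 0 = p ∧ f n' = q ∧
        (∀ i < n', LocEdge d P Ors (f i) (f (i + 1))) ∧
        ∑ i ∈ Finset.range n', dist (f i) (f (i + 1)) ≤ (1 + ε) * dist p q := by
    intro n
    induction n with
    | zero => intro p _ q _ h; omega
    | succ n ih =>
      intro p hp q hq hcard
      by_cases hpq : p = q
      · subst hpq
        exact ⟨0, fun _ => p, rfl, rfl, fun i hi => absurd hi (Nat.not_lt_zero i), by simp⟩
      · have hℓ : 0 < dist p q := dist_pos.2 hpq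
        have hmono : ∀ a ∈ P, ∀ b ∈ P, dist a b < dist p q →
            (D.filter (fun r => r < dist a b)).card < n := by
          intro a ha b hb hab
          have hsub : D.filter (fun r => r < dist a b) ⊂ D.filter (fun r => r < dist p q) := by
            constructor
            · intro r hr
              rw [Finset.mem_filter] at *
              exact ⟨hr.1, hr.2.trans hab⟩
            · intro hcon
              have hmem : dist a b ∈ D.filter (fun r => r < dist p q) := by
                rw [Finset.mem_filter]
                refine ⟨?_, hab⟩
                rw [hD]
                exact Finset.mem_image.2 ⟨(a, b),
                  Finset.mem_product.2 ⟨(hmemF a).2 ha, (hmemF b).2 hb⟩, rfl⟩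
              have := hcon hmem
              rw [Finset.mem_filter] at this
              exact lt_irrefl _ this.2
          have := Finset.card_lt_card hsub
          omega
        obtain ⟨σ, hσ, hcases⟩ := hloc p (hPc hp) q (hPc hq) hpq
        rcases hcases with hgl | hgl
        · obtain ⟨x, y, hedge, hxp, hyq, hxy⟩ :=
            stepLemma ε hε hε1 P hPfin hPc Ors σ hσ (hdom σ hσ) p q hp hq hpq hgl
          have hxP : x ∈ P := hedge.1
          have hyP : y ∈ P := hedge.2.1
          have h1 : dist p x < dist p q := by rw [dist_comm]; linarith
          have h2 : dist y q < dist p q := by linarith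
          obtain ⟨m1, g1, hg10, hg11, hge1, hgs1⟩ := ih p hp x hxP (hmono p hp x hxP h1)
          obtain ⟨m2, g2, hg20, hg21, hge2, hgs2⟩ := ih y hyP q hq (hmono y hyP q hq h2)
          set gm : ℕ → Pt d := fun i => if i = 0 then x else y with hgm
          have hgm0 : gm 0 = x := rfl
          have hgm1 : gm 1 = y := rfl
          have hgme : ∀ i < 1, LocEdge d P Ors (gm i) (gm (i + 1)) := by
            intro i hi
            interval_cases i
            exact hedge
          have hgms : ∑ i ∈ Finset.range 1, dist (gm i) (gm (i + 1)) = dist x y := by rw [Finset.sum_range_one, hgm0, hgm1]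
          obtain ⟨g3, hg30, hg31, hge3, hgs3⟩ := pathAppend (LocEdge d P Ors) p x y m1 1 g1 gm
            hg10 hg11 hgm0 hgm1 hge1 hgme
          obtain ⟨g4, hg40, hg41, hge4, hgs4⟩ := pathAppend (LocEdge d P Ors) p y q (m1 + 1) m2
            g3 g2 hg30 hg31 hg20 hg21 hge3 hge2
          refine ⟨m1 + 1 + m2, g4, hg40, hg41, hge4, ?_⟩
          rw [hgs4, hgs3, hgms]
          rw [dist_comm p x] at hgs1
          have hb1 : ε * dist x p ≤ ε * (dist p q / 8) :=
            mul_le_mul_of_nonneg_left hxp hε.le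
          have hb2 : ε * dist y q ≤ ε * (dist p q / 8) :=
            mul_le_mul_of_nonneg_left hyq hε.le
          linarith [mul_nonneg hε.le hℓ.le]
        · obtain ⟨x, y, hedge, hxq, hyp, hxy⟩ :=
            stepLemma ε hε hε1 P hPfin hPc Ors σ hσ (hdom σ hσ) q p hq hp (Ne.symm hpq) hgl
          have hxP : x ∈ P := hedge.1
          have hyP : y ∈ P := hedge.2.1
          have hqp : dist q p = dist p q := dist_comm q p
          have h1 : dist p y < dist p q := by rw [dist_comm]; rw [hqp] at hyp; linarith
          have h2 : dist x q < dist p q := by rw [hqp] at hxq; linarith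
          obtain ⟨m1, g1, hg10, hg11, hge1, hgs1⟩ := ih p hp y hyP (hmono p hp y hyP h1)
          obtain ⟨m2, g2, hg20, hg21, hge2, hgs2⟩ := ih x hxP q hq (hmono x hxP q hq h2)
          set gm : ℕ → Pt d := fun i => if i = 0 then y else x with hgm
          have hgm0 : gm 0 = y := rfl
          have hgm1 : gm 1 = x := rfl
          have hgme : ∀ i < 1, LocEdge d P Ors (gm i) (gm (i + 1)) := by
            intro i hi
            interval_cases i
            exact locEdgeSymm hedge
          have hgms : ∑ i ∈ Finset.range 1, dist (gm i) (gm (i + 1)) = dist y x := by rw [Finset.sum_range_one, hgm0, hgm1]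
          obtain ⟨g3, hg30, hg31, hge3, hgs3⟩ := pathAppend (LocEdge d P Ors) p y x m1 1 g1 gm
            hg10 hg11 hgm0 hgm1 hge1 hgme
          obtain ⟨g4, hg40, hg41, hge4, hgs4⟩ := pathAppend (LocEdge d P Ors) p x q (m1 + 1) m2
            g3 g2 hg30 hg31 hg20 hg21 hge3 hge2
          refine ⟨m1 + 1 + m2, g4, hg40, hg41, hge4, ?_⟩
          rw [hgs4, hgs3, hgms]
          rw [dist_comm p y] at hgs1
          rw [hqp] at hxy hxq hyp
          rw [dist_comm y x]
          have hb1 : ε * dist y p ≤ ε * (dist p q / 8) :=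
            mul_le_mul_of_nonneg_left hyp hε.le
          have hb2 : ε * dist x q ≤ ε * (dist p q / 8) :=
            mul_le_mul_of_nonneg_left hxq hε.le
          linarith [mul_nonneg hε.le hℓ.le]
  intro p hp q hq
  exact hkey ((D.filter (fun r => r < dist p q)).card + 1) p hp q hq (Nat.lt_succ_self _)
end

section
/- Let 0 < ε ≤ γ < 1, let P ⊆ ℝ^d be a finite set with at least two points, and let Π be a set of linear orders, each defined on a set containing P, such that for every pair of distinct points p, q ∈ P some σ ∈ Π is (ε,γ)-local for p and q. If p, q ∈ P form a closest pair of P (i.e., ‖p − q‖ = min{‖x − y‖ : x, y ∈ P, x ≠ y}), then p and q are joined by an edge of the locality graph L(P, Π). -/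
open Metric Set

theorem stmt_13 (d : ℕ) (ε γ : ℝ) (hε : 0 < ε) (hεγ : ε ≤ γ) (hγ : γ < 1)
    (P : Set (Pt d)) (hPfin : P.Finite) (hP2 : 2 ≤ P.ncard)
    (Ors : Set (LinOrderOn (Pt d))) (hdom : ∀ σ ∈ Ors, P ⊆ σ.dom)
    (hloc : ∀ p ∈ P, ∀ q ∈ P, p ≠ q →
      ∃ σ ∈ Ors, GapLocal d σ ε γ p q ∨ GapLocal d σ ε γ q p)
    (p q : Pt d) (hp : p ∈ P) (hq : q ∈ P) (hpq : p ≠ q)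
    (hclosest : ∀ x ∈ P, ∀ y ∈ P, x ≠ y → dist p q ≤ dist x y) :
    LocEdge d P Ors p q := by
  obtain ⟨σ, hσ, hcase⟩ := hloc p hp q hq hpq
  refine ⟨hp, hq, hpq, σ, hσ, ?_⟩
  have hsub := hdom σ hσ
  have hppos : 0 < dist p q := dist_pos.2 hpq
  intro z hz
  have hzdom := hsub hz
  rcases hcase with hg | hg
  · constructor
    · rintro ⟨h1, h2⟩
      rcases eq_or_ne z p with rfl | hzp
      · exact σ.irrefl z hzdom h1
      rcases eq_or_ne z q with rfl | hzq
      · exact σ.irrefl z hzdom h2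
      have hmin := (hg.2 z hzdom h1 h2).2
      have h3 : dist p q ≤ dist z p := hclosest z hz p hp hzp
      have h4 : dist p q ≤ dist z q := hclosest z hz q hq hzq
      have h5 : dist p q ≤ min (dist z p) (dist z q) := le_min h3 h4
      nlinarith [h5.trans hmin]
    · rintro ⟨h1, h2⟩
      have h3 := σ.trans q (hsub hq) z hzdom p (hsub hp) h1 h2
      have h4 := σ.trans p (hsub hp) q (hsub hq) p (hsub hp) hg.1 h3
      exact σ.irrefl p (hsub hp) h4
  · constructor
    · rintro ⟨h1, h2⟩
      have h3 := σ.trans p (hsub hp) z hzdom q (hsub hq) h1 h2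
      have h4 := σ.trans q (hsub hq) p (hsub hp) q (hsub hq) hg.1 h3
      exact σ.irrefl q (hsub hq) h4
    · rintro ⟨h1, h2⟩
      rcases eq_or_ne z q with rfl | hzq
      · exact σ.irrefl z hzdom h1
      rcases eq_or_ne z p with rfl | hzp
      · exact σ.irrefl z hzdom h2
      have hmin := (hg.2 z hzdom h1 h2).2
      have h3 : dist p q ≤ dist z q := hclosest z hz q hq hzq
      have h4 : dist p q ≤ dist z p := hclosest z hz p hp hzp
      have h5 : dist p q ≤ min (dist z q) (dist z p) := le_min h3 h4
      have h6 : dist q p = dist p q := dist_comm q p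
      rw [h6] at hmin
      nlinarith [h5.trans hmin]
end

section
/- For each dimension d ≥ 2 there is a constant c_d > 0 such that for every ε ∈ (0,1) and every γ with ε ≤ γ < 1 there exists a finite set P ⊆ ℝ^d with |P| ≥ c_d / ε^{d−1} such that any set Π of linear orders on P with the property that every pair of distinct points of P has an (ε,γ)-local order in Π must satisfy |Π| ≥ c_d / ε^{d−1}. -/
open Metric Set

noncomputable section S15Aux
namespace S15

lemma numeric_core (E s ε t L0 r Sab X Y : ℝ)
    (hE : 1 ≤ E) (hε : 0 < ε) (hs : 64*E*(1+4*E)*ε ≤ s)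
    (hX : X = Y - t*(1-t)*L0^2)
    (hY : |Y| ≤ 4*E*r)
    (hSab : |Sab| ≤ 4*E*L0)
    (hr1 : s - t*L0 ≤ r) (hr2 : s - (1-t)*L0 ≤ r)
    (hL0s : s ≤ L0) (hL0 : L0 ≤ 4*E) :
    4*ε^2*(L0^2+Sab^2) ≤ r^2 + X^2 := by
  have hE0 : (0:ℝ) < E := by linarith
  have hspos : 0 < s :=
    lt_of_lt_of_le (by positivity : (0:ℝ) < 64*E*(1+4*E)*ε) hs
  have hL0pos : 0 < L0 := lt_of_lt_of_le hspos hL0s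
  have hεe : (0:ℝ) ≤ 64*E*(1+4*E)*ε := by positivity
  have c3 : (64*E*(1+4*E)*ε)^2 ≤ s^2 := pow_le_pow_left₀ hεe hs 2
  have c1 : Sab^2 ≤ (4*E*L0)^2 := by
    rw [← sq_abs]; exact pow_le_pow_left₀ (abs_nonneg _) hSab 2
  have d1 : ε^2*Sab^2 ≤ ε^2*(4*E*L0)^2 := mul_le_mul_of_nonneg_left c1 (sq_nonneg ε)
  have n1 : (0:ℝ) ≤ E*(ε^2*L0^2) := by positivity
  have n2 : (0:ℝ) ≤ E^2*(ε^2*L0^2) := by positivity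
  have n3 : (0:ℝ) ≤ E^3*(ε^2*L0^2) := by positivity
  have n4 : (0:ℝ) ≤ E^4*(ε^2*L0^2) := by positivity
  by_cases hcase : t*L0 ≤ s/2 ∨ (1-t)*L0 ≤ s/2
  · -- Case I : r ≥ s/2
    have hrs : s/2 ≤ r := by rcases hcase with h | h <;> linarith
    have c4 : (s/2)^2 ≤ r^2 := pow_le_pow_left₀ (by linarith) hrs 2
    have c2 : L0^2 ≤ (4*E)^2 := pow_le_pow_left₀ hL0pos.le hL0 2
    have d2 : ε^2*L0^2 ≤ ε^2*(4*E)^2 := mul_le_mul_of_nonneg_left c2 (sq_nonneg ε)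
    have d3 : E^2*(ε^2*L0^2) ≤ E^2*(ε^2*(4*E)^2) :=
      mul_le_mul_of_nonneg_left d2 (sq_nonneg E)
    have m2 : (0:ℝ) ≤ E^2*ε^2 := by positivity
    have m3 : (0:ℝ) ≤ E^3*ε^2 := by positivity
    have m4 : (0:ℝ) ≤ E^4*ε^2 := by positivity
    linarith [sq_nonneg X, d1, d2, d3, c3, c4, m2, m3, m4]
  · push_neg at hcase
    obtain ⟨hA, hB⟩ := hcase
    have hW : s*L0/4 ≤ t*(1-t)*L0^2 := by
      nlinarith [mul_pos (by linarith : (0:ℝ) < t*L0 - s/2) (by linarith : (0:ℝ) < (1-t)*L0),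
        mul_pos (by linarith : (0:ℝ) < (1-t)*L0 - s/2) (by linarith : (0:ℝ) < t*L0)]
    have c3L : (64*E*(1+4*E)*ε)^2*L0^2 ≤ s^2*L0^2 :=
      mul_le_mul_of_nonneg_right c3 (sq_nonneg L0)
    have h0 : (0:ℝ) ≤ s*L0/8 := by positivity
    by_cases hrr : s*L0/8 ≤ 4*E*r
    · have c5 : (s*L0/8)^2 ≤ (4*E*r)^2 := pow_le_pow_left₀ h0 hrr 2
      have key : 0 ≤ E^2*(r^2 - 4*(1+4*E)^2*ε^2*L0^2) := by linarith [c5, c3L]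
      have hE2pos : (0:ℝ) < E^2 := by positivity
      have key2 : 0 ≤ r^2 - 4*(1+4*E)^2*ε^2*L0^2 := by
        by_contra hcon
        push_neg at hcon
        have h' : 0 < E^2*(4*(1+4*E)^2*ε^2*L0^2 - r^2) := mul_pos hE2pos (by linarith)
        linarith [key, h']
      linarith [sq_nonneg X, d1, key2, n1, n2]
    · push_neg at hrr
      have hYle : Y ≤ 4*E*r := (abs_le.mp hY).2
      have hXle : X ≤ -(s*L0/8) := by rw [hX]; linarith
      have c6 : (s*L0/8)^2 ≤ X^2 := by
        have h1 : (s*L0/8)*(s*L0/8) ≤ (-X)*(-X) := mul_self_le_mul_self h0 (by linarith)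
        linarith [h1]
      have hE3 : (1:ℝ) ≤ E^3 := by nlinarith [hE]
      have m' : ε^2*L0^2 ≤ E^3*(ε^2*L0^2) :=
        le_mul_of_one_le_left (by positivity) hE3
      linarith [sq_nonneg r, d1, c6, c3L, m', n2, n3, n4]

abbrev E (e : ℕ) := EuclideanSpace ℝ (Fin e)

def mkPt (e : ℕ) (y : E e) (h : ℝ) : Pt (e+1) := WithLp.toLp 2 (Fin.snoc (α := fun _ => ℝ) y.ofLp h)

def F (e : ℕ) (y : E e) : Pt (e+1) := mkPt e y (‖y‖^2)

lemma dist_sq_eq (n : ℕ) (x y : EuclideanSpace ℝ (Fin n)) :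
    dist x y ^ 2 = ∑ i, (x i - y i)^2 := by
  rw [EuclideanSpace.dist_eq, Real.sq_sqrt (by positivity)]
  simp [Real.dist_eq, sq_abs]

lemma norm_sq_eq (n : ℕ) (x : EuclideanSpace ℝ (Fin n)) :
    ‖x‖ ^ 2 = ∑ i, (x i)^2 := by
  rw [EuclideanSpace.norm_eq, Real.sq_sqrt (by positivity)]
  simp [Real.norm_eq_abs, sq_abs]

lemma dist_mk (e : ℕ) (y z : E e) (h g : ℝ) :
    dist (mkPt e y h) (mkPt e z g) ^ 2 = dist y z ^ 2 + (h - g)^2 := by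
  rw [dist_sq_eq, dist_sq_eq, Fin.sum_univ_castSucc]
  simp [mkPt]

lemma comb_mk (e : ℕ) (t : ℝ) (x y : E e) (h g : ℝ) :
    (1-t) • mkPt e x h + t • mkPt e y g = mkPt e ((1-t)•x + t•y) ((1-t)*h + t*g) := by
  ext i
  simp only [PiLp.add_apply, PiLp.smul_apply, smul_eq_mul]
  induction i using Fin.lastCases with
  | last => simp [mkPt]
  | cast j => simp [mkPt]

lemma inner_diff (e : ℕ) (u v : E e) :
    ‖u‖^2 - ‖v‖^2 = (inner ℝ (u+v) (u-v) : ℝ) := by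
  simp only [inner_add_left, inner_sub_right, real_inner_self_eq_norm_sq]
  rw [real_inner_comm v u]
  ring

lemma normsq_diff_le (e : ℕ) (u v : E e) (hu : ‖u‖ ≤ 2*e) (hv : ‖v‖ ≤ 2*e) :
    |‖u‖^2 - ‖v‖^2| ≤ 4*e*‖u-v‖ := by
  rw [inner_diff]
  calc |(inner ℝ (u+v) (u-v) : ℝ)| ≤ ‖u+v‖ * ‖u-v‖ := abs_real_inner_le_norm _ _
    _ ≤ (4*e) * ‖u-v‖ := by
        apply mul_le_mul_of_nonneg_right _ (norm_nonneg _)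
        calc ‖u+v‖ ≤ ‖u‖ + ‖v‖ := norm_add_le _ _
          _ ≤ 4*e := by linarith

lemma key_geom (e : ℕ) (he : 1 ≤ (e:ℝ)) (s ε : ℝ) (hε : 0 < ε)
    (hs : 64 * e * (1 + 4*e) * ε ≤ s)
    (a b c : E e) (ha : ‖a‖ ≤ 2*e) (hb : ‖b‖ ≤ 2*e) (hc : ‖c‖ ≤ 2*e)
    (hab : s ≤ dist a b) (hca : s ≤ dist c a) (hcb : s ≤ dist c b)
    (z : Pt (e+1)) (hz : z ∈ segment ℝ (F e a) (F e b)) :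
    2 * ε * dist (F e a) (F e b) ≤ dist (F e c) z := by
  rw [segment_eq_image] at hz
  obtain ⟨t, htm, rfl⟩ := hz
  obtain ⟨ht0, ht1⟩ : 0 ≤ t ∧ t ≤ 1 := by simpa using htm
  set x' : E e := (1-t)•a + t•b with hx'def
  have hzeq : (1-t) • F e a + t • F e b = mkPt e x' ((1-t)*‖a‖^2 + t*‖b‖^2) :=
    comb_mk e t a b _ _
  set L0 := dist a b with hL0def
  set r := dist c x' with hrdef
  have hD : dist (F e c) ((1-t) • F e a + t • F e b) ^ 2
      = r^2 + (‖c‖^2 - ((1-t)*‖a‖^2 + t*‖b‖^2))^2 := by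
    rw [hzeq]; exact dist_mk e c x' _ _
  have hL : dist (F e a) (F e b) ^ 2 = L0^2 + (‖a‖^2 - ‖b‖^2)^2 := dist_mk e a b _ _
  have hx'norm : ‖x'‖ ≤ 2*e := by
    calc ‖x'‖ ≤ ‖(1-t)•a‖ + ‖t•b‖ := norm_add_le _ _
      _ = (1-t)*‖a‖ + t*‖b‖ := by
          rw [norm_smul, norm_smul, Real.norm_eq_abs, Real.norm_eq_abs,
            abs_of_nonneg (by linarith), abs_of_nonneg ht0]
      _ ≤ 2*e := by nlinarith [norm_nonneg a, norm_nonneg b]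
  have hSab_le : |‖a‖^2 - ‖b‖^2| ≤ 4*e*L0 := by
    have := normsq_diff_le e a b ha hb
    rwa [← dist_eq_norm] at this
  have hSxc : |‖c‖^2 - ‖x'‖^2| ≤ 4*e*r := by
    have := normsq_diff_le e c x' hc hx'norm
    rwa [← dist_eq_norm] at this
  have hident : (1-t)*‖a‖^2 + t*‖b‖^2 = ‖x'‖^2 + t*(1-t)*L0^2 := by
    have h1 : ‖x'‖^2 = (1-t)^2*‖a‖^2 + 2*((1-t)*t)*(inner ℝ a b : ℝ) + t^2*‖b‖^2 := by
      rw [hx'def, norm_add_sq_real, norm_smul, norm_smul, real_inner_smul_left,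
        real_inner_smul_right, Real.norm_eq_abs, Real.norm_eq_abs,
        abs_of_nonneg (by linarith : (0:ℝ) ≤ 1 - t), abs_of_nonneg ht0]
      ring
    have h2 : L0^2 = ‖a‖^2 - 2*(inner ℝ a b : ℝ) + ‖b‖^2 := by
      rw [hL0def, dist_eq_norm, norm_sub_sq_real]
    rw [h1, h2]; ring
  have hdxa : dist x' a = t * L0 := by
    have hxa : x' - a = t • (b - a) := by rw [hx'def]; module
    rw [dist_eq_norm, hxa, norm_smul, Real.norm_eq_abs, abs_of_nonneg ht0,
      ← dist_eq_norm, dist_comm]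
  have hdxb : dist x' b = (1-t) * L0 := by
    have hxb : x' - b = (1-t) • (a - b) := by rw [hx'def]; module
    rw [dist_eq_norm, hxb, norm_smul, Real.norm_eq_abs,
      abs_of_nonneg (by linarith : (0:ℝ) ≤ 1-t), ← dist_eq_norm]
  have hr1 : s - t*L0 ≤ r := by
    have := dist_triangle c x' a
    rw [hdxa] at this; linarith
  have hr2 : s - (1-t)*L0 ≤ r := by
    have := dist_triangle c x' b
    rw [hdxb] at this; linarith
  have hL0le : L0 ≤ 4*e := by
    rw [hL0def, dist_eq_norm]
    calc ‖a - b‖ ≤ ‖a‖ + ‖b‖ := norm_sub_le _ _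
      _ ≤ 4*e := by linarith
  have hXeq : ‖c‖^2 - ((1-t)*‖a‖^2 + t*‖b‖^2) = (‖c‖^2 - ‖x'‖^2) - t*(1-t)*L0^2 := by
    rw [hident]; ring
  have hmain := numeric_core (e:ℝ) s ε t L0 r (‖a‖^2 - ‖b‖^2)
    (‖c‖^2 - ((1-t)*‖a‖^2 + t*‖b‖^2)) (‖c‖^2 - ‖x'‖^2)
    he hε hs hXeq hSxc hSab_le hr1 hr2 hab hL0le
  have hsq : (2 * ε * dist (F e a) (F e b))^2
      ≤ (dist (F e c) ((1-t) • F e a + t • F e b))^2 := by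
    rw [hD]
    calc (2 * ε * dist (F e a) (F e b))^2 = 4*ε^2*(dist (F e a) (F e b))^2 := by ring
      _ = 4*ε^2*(L0^2 + (‖a‖^2 - ‖b‖^2)^2) := by rw [hL]
      _ ≤ _ := hmain
  have h2εnn : 0 ≤ 2 * ε * dist (F e a) (F e b) := by positivity
  calc 2 * ε * dist (F e a) (F e b)
      = Real.sqrt ((2 * ε * dist (F e a) (F e b))^2) := (Real.sqrt_sq h2εnn).symm
    _ ≤ Real.sqrt ((dist (F e c) ((1-t) • F e a + t • F e b))^2) := Real.sqrt_le_sqrt hsq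
    _ = _ := Real.sqrt_sq dist_nonneg

lemma coord_le_dist (n : ℕ) (x y : EuclideanSpace ℝ (Fin n)) (j : Fin n) :
    |x j - y j| ≤ dist x y := by
  have h1 : (x j - y j)^2 ≤ dist x y ^ 2 := by
    rw [dist_sq_eq]
    exact Finset.single_le_sum (f := fun i => (x i - y i)^2) (fun i _ => sq_nonneg _)
      (Finset.mem_univ j)
  calc |x j - y j| = Real.sqrt ((x j - y j)^2) := (Real.sqrt_sq_eq_abs _).symm
    _ ≤ Real.sqrt (dist x y ^ 2) := Real.sqrt_le_sqrt h1
    _ = dist x y := Real.sqrt_sq dist_nonneg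

lemma norm_le_of_coord (e : ℕ) (he : 1 ≤ (e:ℝ)) (x : E e) (h : ∀ j, |x j| ≤ 2) :
    ‖x‖ ≤ 2*e := by
  have h2 : ‖x‖^2 ≤ 4*e := by
    rw [norm_sq_eq]
    calc ∑ j, (x j)^2 ≤ ∑ _j : Fin e, (4:ℝ) :=
          Finset.sum_le_sum (fun j _ => by nlinarith [h j, abs_nonneg (x j), sq_abs (x j)])
      _ = 4*e := by simp [Finset.sum_const, Finset.card_univ, mul_comm]
  nlinarith [norm_nonneg x, h2, he]

def Gpt (e N : ℕ) (s : ℝ) (g : Fin e → Fin N) : E e := WithLp.toLp 2 (fun j => s * ((g j : ℕ) : ℝ))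

lemma grid_sep (e N : ℕ) (s : ℝ) (hs : 0 < s) (g g' : Fin e → Fin N) (hne : g ≠ g') :
    s ≤ dist (Gpt e N s g) (Gpt e N s g') := by
  obtain ⟨j, hj⟩ := Function.ne_iff.mp hne
  have hvne : (g j : ℕ) ≠ (g' j : ℕ) := fun h => hj (Fin.val_injective h)
  have hz : (1:ℤ) ≤ |(g j : ℕ) - ((g' j : ℕ) : ℤ)| :=
    Int.one_le_abs (sub_ne_zero.mpr (by exact_mod_cast hvne))
  have hzr : (1:ℝ) ≤ |((g j : ℕ) : ℝ) - ((g' j : ℕ) : ℝ)| := by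
    have := hz
    have h2 : ((1:ℤ):ℝ) ≤ ((|(g j : ℕ) - ((g' j : ℕ) : ℤ)| : ℤ) : ℝ) := by exact_mod_cast this
    rwa [Int.cast_abs, Int.cast_one, Int.cast_sub, Int.cast_natCast, Int.cast_natCast] at h2
  have hcoord : s ≤ |Gpt e N s g j - Gpt e N s g' j| := by
    have : Gpt e N s g j - Gpt e N s g' j = s * (((g j : ℕ) : ℝ) - ((g' j : ℕ) : ℝ)) := by
      simp [Gpt]; ring
    rw [this, abs_mul, abs_of_pos hs]
    nlinarith [hzr, hs]
  exact le_trans hcoord (coord_le_dist e _ _ j)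

end S15
end S15Aux

set_option maxHeartbeats 1000000 in
theorem stmt_15 (d : ℕ) (hd : 2 ≤ d) :
    ∃ c : ℝ, 0 < c ∧
      ∀ ε γ : ℝ, 0 < ε → ε ≤ γ → γ < 1 →
        ∃ P : Set (Pt d), P.Finite ∧ c / ε ^ (d - 1) ≤ (P.ncard : ℝ) ∧
          ∀ Ors : Set (LinOrderOn (Pt d)), (∀ σ ∈ Ors, σ.dom = P) →
            (∀ p ∈ P, ∀ q ∈ P, p ≠ q →
                ∃ σ ∈ Ors, GapLocal d σ ε γ p q ∨ GapLocal d σ ε γ q p) →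
            (c / ε ^ (d - 1) ≤ (Ors.ncard : ℝ) ∨ Ors.Infinite) := by
  classical
  obtain ⟨e, rfl⟩ : ∃ e, d = e + 1 := ⟨d - 1, by omega⟩
  have he : 1 ≤ e := by omega
  have heR : (1:ℝ) ≤ (e:ℝ) := by exact_mod_cast he
  have heR0 : (0:ℝ) < (e:ℝ) := by linarith
  set K : ℝ := 64 * (e:ℝ) * (1 + 4*(e:ℝ)) with hKdef
  have hKpos : 0 < K := by
    rw [hKdef]; positivity
  have hK1 : 1 ≤ K := by rw [hKdef]; nlinarith
  set c : ℝ := (1/K)^e / 4 with hcdef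
  have hcpos : 0 < c := by rw [hcdef]; positivity
  refine ⟨c, hcpos, ?_⟩
  intro ε γ hε hεγ hγ
  simp only [Nat.add_sub_cancel]
  have hεe : (0:ℝ) < ε ^ e := pow_pos hε e
  by_cases hbig : 1/K < ε
  · -- trivial two-point configuration
    have hKe : (1/K)^e ≤ ε^e := pow_le_pow_left₀ (by positivity) hbig.le e
    have hc1 : c / ε^e ≤ 1 := by
      rw [div_le_one hεe, hcdef]; linarith
    set p1 : Pt (e+1) := EuclideanSpace.single 0 (1:ℝ) with hp1def
    have hne01 : (0 : Pt (e+1)) ≠ p1 := by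
      intro h
      have h0 := congrFun (congrArg WithLp.ofLp h) (0 : Fin (e+1))
      simp [hp1def, EuclideanSpace.single_apply] at h0
    refine ⟨{(0 : Pt (e+1)), p1}, (Set.finite_singleton _).insert _, ?_, ?_⟩
    · rw [Set.ncard_pair hne01]
      push_cast
      linarith
    · intro Ors hdomOrs hcov
      by_cases hinf : Ors.Infinite
      · right; exact hinf
      left
      obtain ⟨σ, hσ, -⟩ := hcov 0 (by simp) p1 (by simp) hne01
      have h1 : 1 ≤ Ors.ncard := (Set.ncard_pos (Set.not_infinite.mp hinf)).mpr ⟨σ, hσ⟩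
      have : (1:ℝ) ≤ (Ors.ncard : ℝ) := by exact_mod_cast h1
      linarith
  · -- main construction
    push_neg at hbig
    set s : ℝ := K * ε with hsdef
    have hspos : 0 < s := by rw [hsdef]; positivity
    have hs1 : s ≤ 1 := by
      rw [hsdef]
      calc K * ε ≤ K * (1/K) := by
            apply mul_le_mul_of_nonneg_left hbig hKpos.le
        _ = 1 := by field_simp
    set N : ℕ := ⌈1/s⌉₊ + 1 with hNdef
    have hNpos : 0 < N := by omega
    have hN2 : 2 ≤ N := by
      have : 0 < ⌈1/s⌉₊ := Nat.ceil_pos.mpr (by positivity)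
      omega
    have hNge : 1/s ≤ (N:ℝ) := by
      rw [hNdef]
      push_cast
      linarith [Nat.le_ceil (1/s)]
    have hNle : s * ((N:ℝ) - 1) ≤ 2 := by
      have h1 : (⌈1/s⌉₊ : ℝ) < 1/s + 1 := Nat.ceil_lt_add_one (by positivity)
      have h2 : ((N:ℝ) - 1) = (⌈1/s⌉₊ : ℝ) := by rw [hNdef]; push_cast; ring
      rw [h2]
      have h3 : s * (⌈1/s⌉₊ : ℝ) ≤ s * (1/s + 1) :=
        mul_le_mul_of_nonneg_left h1.le hspos.le
      have h4 : s * (1/s + 1) = 1 + s := by field_simp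
      nlinarith
    -- the grid point family
    set φ : (Fin e → Fin N) → Pt (e+1) := fun g => S15.F e (S15.Gpt e N s g) with hφdef
    have hGcoord : ∀ g : Fin e → Fin N, ∀ j, |S15.Gpt e N s g j| ≤ 2 := by
      intro g j
      have h1 : ((g j : ℕ) : ℝ) ≤ (N:ℝ) - 1 := by
        have h3 : ((g j : ℕ) : ℝ) < (N:ℝ) := by exact_mod_cast (g j).isLt
        have h4 : ((g j : ℕ) : ℝ) + 1 ≤ (N:ℝ) := by
          have h5 : ((g j : ℕ) + 1 : ℕ) ≤ N := (g j).isLt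
          exact_mod_cast h5
        linarith
      have h6 : (0:ℝ) ≤ s * ((g j : ℕ) : ℝ) := by positivity
      have h7 : s * ((g j : ℕ) : ℝ) ≤ s * ((N:ℝ) - 1) :=
        mul_le_mul_of_nonneg_left h1 hspos.le
      simp only [S15.Gpt]
      rw [abs_of_nonneg h6]
      linarith
    have hGnorm : ∀ g : Fin e → Fin N, ‖S15.Gpt e N s g‖ ≤ 2*e :=
      fun g => S15.norm_le_of_coord e heR _ (hGcoord g)
    have hφinj : Function.Injective φ := by
      intro g g' hgg
      by_contra hne
      have hsep := S15.grid_sep e N s hspos g g' hne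
      have hGne : S15.Gpt e N s g ≠ S15.Gpt e N s g' := by
        intro h
        rw [h] at hsep
        simp at hsep
        linarith
      apply hGne
      ext j
      have := congrFun (congrArg WithLp.ofLp hgg) (Fin.castSucc j)
      simpa [hφdef, S15.F, S15.mkPt] using this
    set P : Set (Pt (e+1)) := Set.range φ with hPdef
    have hPfin : P.Finite := Set.finite_range φ
    have hPcard : P.ncard = N^e := by
      rw [hPdef, ← Nat.card_coe_set_eq, Nat.card_range_of_injective hφinj,
        Nat.card_eq_fintype_card, Fintype.card_fun, Fintype.card_fin, Fintype.card_fin]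
    have hNecard : 2 ≤ N^e := le_trans hN2 (Nat.le_self_pow (by omega) N)
    -- key quantitative bound
    have hc4 : 4*(c/ε^e) ≤ ((N:ℝ))^e := by
      have h2 : (1/s)^e ≤ ((N:ℝ))^e := pow_le_pow_left₀ (by positivity) hNge e
      have h3 : (1/s)^e = 4*(c/ε^e) := by
        rw [hsdef, hcdef]
        rw [show 1/(K*ε) = (1/K) * (1/ε) by field_simp]
        rw [mul_pow]
        field_simp
        ring_nf; rw [← mul_pow, mul_inv_cancel₀ hε.ne', one_pow]
      linarith
    refine ⟨P, hPfin, ?_, ?_⟩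
    · rw [hPcard]
      have hcastNe : ((N^e : ℕ) : ℝ) = ((N:ℝ))^e := by push_cast; ring
      rw [hcastNe]
      have : (0:ℝ) < c/ε^e := by positivity
      linarith
    · intro Ors hdomOrs hcov
      by_cases hinf : Ors.Infinite
      · right; exact hinf
      left
      have hfin : Ors.Finite := Set.not_infinite.mp hinf
      -- no point of P lies strictly between a local pair
      have hnb : ∀ σ ∈ Ors, ∀ p ∈ P, ∀ q ∈ P, p ≠ q → GapLocal (e+1) σ ε γ p q →
          ∀ u ∈ P, ¬(σ.lt p u ∧ σ.lt u q) := by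
        intro σ hσ p hp q hq hpq hgl u hu hlt
        have hdom := hdomOrs σ hσ
        have hpd : p ∈ σ.dom := by rw [hdom]; exact hp
        have hqd : q ∈ σ.dom := by rw [hdom]; exact hq
        have hud : u ∈ σ.dom := by rw [hdom]; exact hu
        by_cases hup : u = p
        · exact σ.irrefl p hpd (hup ▸ hlt.1)
        by_cases huq : u = q
        · exact σ.irrefl q hqd (huq ▸ hlt.2)
        obtain ⟨hinfd, -⟩ := hgl.2 u hud hlt.1 hlt.2
        obtain ⟨ga, rfl⟩ := hp
        obtain ⟨gb, rfl⟩ := hq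
        obtain ⟨gc, rfl⟩ := hu
        have hab' : ga ≠ gb := fun h => hpq (by rw [h])
        have hca' : gc ≠ ga := fun h => hup (by rw [h])
        have hcb' : gc ≠ gb := fun h => huq (by rw [h])
        have hseq : 64 * (e:ℝ) * (1 + 4*(e:ℝ)) * ε ≤ s := le_of_eq (by rw [hsdef, hKdef])
        have hgeo : ∀ z ∈ segment ℝ (φ ga) (φ gb), 2*ε*dist (φ ga) (φ gb) ≤ dist (φ gc) z := by
          intro z hz
          exact S15.key_geom e heR s ε hε hseq _ _ _ (hGnorm ga) (hGnorm gb) (hGnorm gc)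
            (S15.grid_sep e N s hspos ga gb hab')
            (S15.grid_sep e N s hspos gc ga hca')
            (S15.grid_sep e N s hspos gc gb hcb') z hz
        have hdpos : 0 < dist (φ ga) (φ gb) := dist_pos.mpr hpq
        have hlt2 : infDist (φ gc) (segment ℝ (φ ga) (φ gb)) < 2*ε*dist (φ ga) (φ gb) :=
          lt_of_le_of_lt hinfd (by nlinarith)
        obtain ⟨z, hzseg, hzlt⟩ :=
          (Metric.infDist_lt_iff ⟨_, left_mem_segment ℝ (φ ga) (φ gb)⟩).mp hlt2
        linarith [hgeo z hzseg]
      -- counting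
      haveI : Inhabited (LinOrderOn (Pt (e+1))) :=
        ⟨⟨∅, fun _ _ => False, fun x hx => (Set.notMem_empty x hx).elim,
          fun x hx => (Set.notMem_empty x hx).elim,
          fun x hx => (Set.notMem_empty x hx).elim⟩⟩
      choose! f hfm hfl using hcov
      set p₀ : Pt (e+1) := φ (fun _ => ⟨0, hNpos⟩) with hp₀def
      have hp₀ : p₀ ∈ P := ⟨_, rfl⟩
      set A : Set (Pt (e+1)) := {q | q ∈ P ∧ q ≠ p₀ ∧ (f p₀ q).lt p₀ q} with hAdef
      set B : Set (Pt (e+1)) := {q | q ∈ P ∧ q ≠ p₀ ∧ ¬ (f p₀ q).lt p₀ q} with hBdef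
      have hgap : ∀ q, q ∈ P → q ≠ p₀ →
          (f p₀ q ∈ Ors ∧ (GapLocal (e+1) (f p₀ q) ε γ p₀ q ∨ GapLocal (e+1) (f p₀ q) ε γ q p₀)) := by
        intro q hq hqne
        exact ⟨hfm p₀ hp₀ q hq (Ne.symm hqne), hfl p₀ hp₀ q hq (Ne.symm hqne)⟩
      have hAloc : ∀ q ∈ A, GapLocal (e+1) (f p₀ q) ε γ p₀ q := by
        intro q hq
        obtain ⟨hqP, hqne, hqlt⟩ := hq
        obtain ⟨hmem, hloc⟩ := hgap q hqP hqne
        rcases hloc with h | h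
        · exact h
        · exfalso
          have hdom := hdomOrs _ hmem
          have hpd : p₀ ∈ (f p₀ q).dom := by rw [hdom]; exact hp₀
          have hqd : q ∈ (f p₀ q).dom := by rw [hdom]; exact hqP
          exact (f p₀ q).irrefl p₀ hpd ((f p₀ q).trans p₀ hpd q hqd p₀ hpd hqlt h.1)
      have hBloc : ∀ q ∈ B, GapLocal (e+1) (f p₀ q) ε γ q p₀ := by
        intro q hq
        obtain ⟨hqP, hqne, hqnlt⟩ := hq
        obtain ⟨hmem, hloc⟩ := hgap q hqP hqne
        rcases hloc with h | h
        · exact absurd h.1 hqnlt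
        · exact h
      have hinjA : Set.InjOn (fun q => f p₀ q) A := by
        intro q hq q' hq' hfeq0
        have hfeq : f p₀ q = f p₀ q' := hfeq0
        by_contra hne
        have hloc := hAloc q hq
        have hloc' := hAloc q' hq'
        obtain ⟨hqP, hqne, hqlt⟩ := hq
        obtain ⟨hq'P, hq'ne, hq'lt⟩ := hq'
        have hmem : f p₀ q ∈ Ors := (hgap q hqP hqne).1
        have hdom := hdomOrs _ hmem
        have hqd : q ∈ (f p₀ q).dom := by rw [hdom]; exact hqP
        have hq'd : q' ∈ (f p₀ q).dom := by rw [hfeq] at hdom ⊢; rw [hdom]; exact hq'P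
        rcases (f p₀ q).total q hqd q' hq'd hne with h | h
        · refine hnb (f p₀ q) hmem p₀ hp₀ q' hq'P (Ne.symm hq'ne) ?_ q hqP ⟨hqlt, h⟩
          rw [hfeq]; exact hloc'
        · have h' : (f p₀ q).lt q' q := h
          refine hnb (f p₀ q) hmem p₀ hp₀ q hqP (Ne.symm hqne) hloc q' hq'P ⟨?_, h'⟩
          have := hloc'.1
          rw [← hfeq] at this
          exact this
      have hinjB : Set.InjOn (fun q => f p₀ q) B := by
        intro q hq q' hq' hfeq0
        have hfeq : f p₀ q = f p₀ q' := hfeq0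
        by_contra hne
        have hloc := hBloc q hq
        have hloc' := hBloc q' hq'
        obtain ⟨hqP, hqne, hqnlt⟩ := hq
        obtain ⟨hq'P, hq'ne, hq'nlt⟩ := hq'
        have hmem : f p₀ q ∈ Ors := (hgap q hqP hqne).1
        have hdom := hdomOrs _ hmem
        have hqd : q ∈ (f p₀ q).dom := by rw [hdom]; exact hqP
        have hq'd : q' ∈ (f p₀ q).dom := by rw [hfeq] at hdom ⊢; rw [hdom]; exact hq'P
        have hloc'2 : GapLocal (e+1) (f p₀ q) ε γ q' p₀ := by rw [hfeq]; exact hloc'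
        rcases (f p₀ q).total q hqd q' hq'd hne with h | h
        · exact hnb (f p₀ q) hmem q hqP p₀ hp₀ hqne hloc q' hq'P ⟨h, hloc'2.1⟩
        · exact hnb (f p₀ q) hmem q' hq'P p₀ hp₀ hq'ne hloc'2 q hqP ⟨h, hloc.1⟩
      have hAOrs : ∀ q ∈ A, f p₀ q ∈ Ors := fun q hq => (hgap q hq.1 hq.2.1).1
      have hBOrs : ∀ q ∈ B, f p₀ q ∈ Ors := fun q hq => (hgap q hq.1 hq.2.1).1
      have hAcard : A.ncard ≤ Ors.ncard :=
        Set.ncard_le_ncard_of_injOn (fun q => f p₀ q) hAOrs hinjA hfin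
      have hBcard : B.ncard ≤ Ors.ncard :=
        Set.ncard_le_ncard_of_injOn (fun q => f p₀ q) hBOrs hinjB hfin
      have hsub : P \ {p₀} ⊆ A ∪ B := by
        intro q hq
        obtain ⟨hqP, hqne⟩ := hq
        simp only [Set.mem_singleton_iff] at hqne
        by_cases h : (f p₀ q).lt p₀ q
        · left; exact ⟨hqP, hqne, h⟩
        · right; exact ⟨hqP, hqne, h⟩
      have hABfin : (A ∪ B).Finite := hPfin.subset (by
        intro q hq
        rcases hq with h | h
        exacts [h.1, h.1])
      have hcount : P.ncard - 1 ≤ 2 * Ors.ncard := by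
        have h1 : (P \ {p₀}).ncard = P.ncard - 1 :=
          Set.ncard_diff_singleton_of_mem hp₀
        have h2 : (P \ {p₀}).ncard ≤ (A ∪ B).ncard :=
          Set.ncard_le_ncard hsub hABfin
        have h3 : (A ∪ B).ncard ≤ A.ncard + B.ncard := Set.ncard_union_le A B
        omega
      have hcountR : ((N:ℝ))^e - 1 ≤ 2 * (Ors.ncard : ℝ) := by
        have h1 : N^e - 1 ≤ 2 * Ors.ncard := by rw [← hPcard]; exact hcount
        have h2 : (1:ℕ) ≤ N^e := by omega
        have h3 : ((N^e - 1 : ℕ) : ℝ) = ((N:ℝ))^e - 1 := by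
          push_cast [h2]
          ring
        calc ((N:ℝ))^e - 1 = ((N^e - 1 : ℕ) : ℝ) := h3.symm
          _ ≤ ((2 * Ors.ncard : ℕ) : ℝ) := by exact_mod_cast h1
          _ = 2 * (Ors.ncard : ℝ) := by push_cast; ring
      have hNR2 : (2:ℝ) ≤ ((N:ℝ))^e := by exact_mod_cast hNecard
      have hcnn : (0:ℝ) ≤ c/ε^e := by positivity
      -- c/ε^e ≤ N^e/4 ≤ (N^e-1)/2 ≤ Ors.ncard
      linarith
end

section
/- For each dimension d ≥ 2 there is a constant c_d > 0 such that for every ε ∈ (0,1) the following holds: if Π is a finite set of linear orders on [0,1)^d such that for every finite set P ⊆ [0,1)^d the locality graph L(P, Π), with each edge xy weighted by ‖x − y‖, is a (1+ε)-spanner of P (i.e., d_L(p,q) ≤ (1+ε)·‖p − q‖ for all p, q ∈ P), then |Π| ≥ c_d / ε^{d−1}. -/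
open Metric Set

/-! ### Auxiliary constructions -/

private lemma coord_dist_le {n : ℕ} (x y : EuclideanSpace ℝ (Fin n)) (i : Fin n) :
    dist (x i) (y i) ≤ dist x y := by
  rw [EuclideanSpace.dist_eq]
  rw [Real.le_sqrt dist_nonneg (by positivity)]
  exact Finset.single_le_sum (f := fun j => dist (x j) (y j) ^ 2)
    (fun j _ => by positivity) (Finset.mem_univ i)

/-- The center of the cube. -/
private noncomputable def ctr (m : ℕ) : Pt (m + 1) := WithLp.toLp 2 (fun _ => 1 / 2)

/-- Squared norm of the grid offset vector. -/
private noncomputable def gw (m K : ℕ) (δ : ℝ) (z : Fin m → Fin K) : ℝ :=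
  ∑ j, (δ * ((z j : ℕ) : ℝ)) ^ 2

/-- Grid points on the sphere of radius 1/4 around the center. -/
private noncomputable def gpt (m K : ℕ) (δ : ℝ) (z : Fin m → Fin K) : Pt (m + 1) :=
  WithLp.toLp 2 (Fin.cons (1 / 2 + Real.sqrt (1 / 16 - gw m K δ z)) (fun j => 1 / 2 + δ * ((z j : ℕ) : ℝ)) : Fin (m + 1) → ℝ)

private lemma ctr_apply (m : ℕ) (i : Fin (m + 1)) : ctr m i = 1 / 2 := rfl

private lemma gpt_zero (m K : ℕ) (δ : ℝ) (z : Fin m → Fin K) :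
    gpt m K δ z 0 = 1 / 2 + Real.sqrt (1 / 16 - gw m K δ z) := rfl

private lemma gpt_succ (m K : ℕ) (δ : ℝ) (z : Fin m → Fin K) (j : Fin m) :
    gpt m K δ z j.succ = 1 / 2 + δ * ((z j : ℕ) : ℝ) := by
  show (Fin.cons (1 / 2 + Real.sqrt (1 / 16 - gw m K δ z)) (fun j => 1 / 2 + δ * ((z j : ℕ) : ℝ)) : Fin (m + 1) → ℝ) j.succ = _
  rw [Fin.cons_succ]

private lemma gw_nonneg (m K : ℕ) (δ : ℝ) (z : Fin m → Fin K) : 0 ≤ gw m K δ z :=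
  Finset.sum_nonneg fun j _ => by positivity

private lemma dist_ctr_gpt (m K : ℕ) (δ : ℝ) (z : Fin m → Fin K)
    (hw : gw m K δ z ≤ 1 / 16) : dist (ctr m) (gpt m K δ z) = 1 / 4 := by
  rw [EuclideanSpace.dist_eq, Fin.sum_univ_succ]
  have h0 : dist (ctr m 0) (gpt m K δ z 0) ^ 2 = 1 / 16 - gw m K δ z := by
    rw [ctr_apply, gpt_zero, Real.dist_eq, sq_abs]
    have h : (1 / 2 - (1 / 2 + Real.sqrt (1 / 16 - gw m K δ z))) ^ 2
        = Real.sqrt (1 / 16 - gw m K δ z) ^ 2 := by ring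
    rw [h, Real.sq_sqrt (by linarith)]
  have h1 : ∀ j : Fin m, dist (ctr m j.succ) (gpt m K δ z j.succ) ^ 2
      = (δ * ((z j : ℕ) : ℝ)) ^ 2 := by
    intro j
    rw [ctr_apply, gpt_succ, Real.dist_eq, sq_abs]
    ring
  rw [h0, Finset.sum_congr rfl (fun j _ => h1 j)]
  have : 1 / 16 - gw m K δ z + gw m K δ z = (1 / 16 : ℝ) := by ring
  rw [show (∑ j : Fin m, (δ * ((z j : ℕ) : ℝ)) ^ 2) = gw m K δ z from rfl, this]
  rw [show (1 / 16 : ℝ) = (1 / 4) ^ 2 by norm_num, Real.sqrt_sq (by norm_num)]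

private lemma gpt_sep (m K : ℕ) (δ : ℝ) (hδ : 0 ≤ δ) {z z' : Fin m → Fin K}
    (h : z ≠ z') : δ ≤ dist (gpt m K δ z) (gpt m K δ z') := by
  obtain ⟨j, hj⟩ := Function.ne_iff.mp h
  have h1 := coord_dist_le (gpt m K δ z) (gpt m K δ z') j.succ
  have h2 : dist (gpt m K δ z j.succ) (gpt m K δ z' j.succ)
      = δ * |((z j : ℕ) : ℝ) - ((z' j : ℕ) : ℝ)| := by
    rw [gpt_succ, gpt_succ, Real.dist_eq]
    rw [show (1 / 2 + δ * ((z j : ℕ) : ℝ)) - (1 / 2 + δ * ((z' j : ℕ) : ℝ))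
        = δ * (((z j : ℕ) : ℝ) - ((z' j : ℕ) : ℝ)) by ring]
    rw [abs_mul, abs_of_nonneg hδ]
  have hne : ((z j : ℕ) : ℤ) ≠ ((z' j : ℕ) : ℤ) := by
    intro hc
    exact hj (Fin.val_injective (by exact_mod_cast hc))
  have h3 : (1 : ℤ) ≤ |((z j : ℕ) : ℤ) - ((z' j : ℕ) : ℤ)| :=
    Int.one_le_abs (sub_ne_zero.mpr hne)
  have h4 : (1 : ℝ) ≤ |((z j : ℕ) : ℝ) - ((z' j : ℕ) : ℝ)| := by
    exact_mod_cast h3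
  nlinarith [dist_nonneg (x := gpt m K δ z j.succ) (y := gpt m K δ z' j.succ)]

private lemma ctr_mem (m : ℕ) : ctr m ∈ unitCube (m + 1) := by
  intro i
  rw [ctr_apply]
  norm_num

private lemma gpt_mem (m K : ℕ) (δ : ℝ) (hδ : 0 ≤ δ) (hδK : δ * K ≤ 1 / 8)
    (z : Fin m → Fin K) (hw : gw m K δ z ≤ 1 / 16) :
    gpt m K δ z ∈ unitCube (m + 1) := by
  intro i
  induction i using Fin.cases with
  | zero =>
    rw [gpt_zero]
    have hs0 : 0 ≤ Real.sqrt (1 / 16 - gw m K δ z) := Real.sqrt_nonneg _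
    have hs1 : Real.sqrt (1 / 16 - gw m K δ z) ≤ 1 / 4 := by
      have h7 := Real.sqrt_le_sqrt (show 1 / 16 - gw m K δ z ≤ 1 / 16 by
        linarith [gw_nonneg m K δ z])
      have h8 : Real.sqrt (1 / 16) = 1 / 4 := by
        rw [show (1 / 16 : ℝ) = (1 / 4) ^ 2 by norm_num, Real.sqrt_sq (by norm_num)]
      linarith
    constructor <;> linarith
  | succ j =>
    rw [gpt_succ]
    have h1 : ((z j : ℕ) : ℝ) ≤ (K : ℝ) := by exact_mod_cast (z j).isLt.le
    have h2 : 0 ≤ δ * ((z j : ℕ) : ℝ) := by positivity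
    have h3 : δ * ((z j : ℕ) : ℝ) ≤ δ * K := by nlinarith
    constructor <;> linarith

private lemma main_bound (m : ℕ) (hm : 1 ≤ m) (ε : ℝ) (hε0 : 0 < ε) (hε1 : ε < 1)
    (Ors : Set (LinOrderOn (Pt (m + 1)))) (hfin : Ors.Finite)
    (hdom : ∀ σ ∈ Ors, σ.dom = unitCube (m + 1))
    (hspan : ∀ P : Set (Pt (m + 1)), P.Finite → P ⊆ unitCube (m + 1) →
      ∀ p ∈ P, ∀ q ∈ P,
        ∃ (n : ℕ) (f : ℕ → Pt (m + 1)), f 0 = p ∧ f n = q ∧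
          (∀ i < n, LocEdge (m + 1) P Ors (f i) (f (i + 1))) ∧
          ∑ i ∈ Finset.range n, dist (f i) (f (i + 1)) ≤ (1 + ε) * dist p q) :
    Ors.Nonempty ∧
      ((⌊1 / (4 * Real.sqrt ((m : ℝ) + 1) * ε)⌋₊ ^ m : ℕ) : ℝ) ≤ 2 * Ors.ncard := by
  classical
  have hS1 : (1 : ℝ) ≤ Real.sqrt ((m : ℝ) + 1) := by
    have h0m : (0 : ℝ) ≤ (m : ℝ) := by positivity
    have := Real.sqrt_le_sqrt (show (1 : ℝ) ≤ (m : ℝ) + 1 by linarith)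
    rwa [Real.sqrt_one] at this
  have hS0 : (0 : ℝ) < Real.sqrt ((m : ℝ) + 1) := lt_of_lt_of_le one_pos hS1
  set S := Real.sqrt ((m : ℝ) + 1) with hSdef
  set K : ℕ := ⌊1 / (4 * S * ε)⌋₊ with hKdef
  set δ : ℝ := ε / 2 with hδdef
  have hδ0 : (0 : ℝ) < δ := by rw [hδdef]; linarith
  have hKle : (K : ℝ) ≤ 1 / (4 * S * ε) := Nat.floor_le (by positivity)
  have hδK : δ * K ≤ 1 / (8 * S) := by
    have h1 : δ * (K : ℝ) ≤ δ * (1 / (4 * S * ε)) := by nlinarith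
    have h2 : δ * (1 / (4 * S * ε)) = 1 / (8 * S) := by
      rw [hδdef]; field_simp; ring
    linarith
  have hδK8 : δ * K ≤ 1 / 8 := by
    have : 1 / (8 * S) ≤ 1 / 8 :=
      one_div_le_one_div_of_le (by norm_num) (by linarith)
    linarith
  have hm0 : (0 : ℝ) ≤ (m : ℝ) := by positivity
  have hgw : ∀ z : Fin m → Fin K, gw m K δ z ≤ 1 / 64 := by
    intro z
    have h1 : ∀ j : Fin m, (δ * ((z j : ℕ) : ℝ)) ^ 2 ≤ (δ * K) ^ 2 := by
      intro j
      have hzj : ((z j : ℕ) : ℝ) ≤ (K : ℝ) := by exact_mod_cast (z j).isLt.le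
      have h2 : (0 : ℝ) ≤ δ * ((z j : ℕ) : ℝ) := by positivity
      nlinarith [mul_le_mul_of_nonneg_left hzj hδ0.le]
    have h3 : gw m K δ z ≤ m * (δ * K) ^ 2 := by
      calc gw m K δ z ≤ ∑ _j : Fin m, (δ * (K : ℝ)) ^ 2 :=
            Finset.sum_le_sum (fun j _ => h1 j)
        _ = m * (δ * K) ^ 2 := by
            rw [Finset.sum_const, Finset.card_univ, Fintype.card_fin, nsmul_eq_mul]
    have hS2 : S ^ 2 = (m : ℝ) + 1 := Real.sq_sqrt (by positivity)
    have h4 : (m : ℝ) * (1 / (8 * S)) ^ 2 ≤ 1 / 64 := by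
      have h5 : (1 / (8 * S)) ^ 2 = 1 / (64 * ((m : ℝ) + 1)) := by
        rw [div_pow, one_pow, mul_pow, hS2]; norm_num
      rw [h5, mul_one_div, div_le_div_iff₀ (by positivity) (by norm_num)]
      linarith
    have h6 : (δ * K) ^ 2 ≤ (1 / (8 * S)) ^ 2 := by
      nlinarith [mul_nonneg hδ0.le (Nat.cast_nonneg K)]
    nlinarith
  have hw16 : ∀ z, gw m K δ z ≤ 1 / 16 := fun z => by linarith [hgw z]
  set P : Set (Pt (m + 1)) := insert (ctr m) (Set.range (gpt m K δ)) with hPdef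
  have hPfin : P.Finite := (Set.finite_range _).insert _
  have hPsub : P ⊆ unitCube (m + 1) := by
    intro x hx
    rcases Set.mem_insert_iff.mp hx with rfl | ⟨z, rfl⟩
    · exact ctr_mem m
    · exact gpt_mem m K δ hδ0.le hδK8 z (hw16 z)
  have hctrP : ctr m ∈ P := Set.mem_insert _ _
  have hgptP : ∀ z, gpt m K δ z ∈ P := fun z => Set.mem_insert_of_mem _ ⟨z, rfl⟩
  have hctrne : ∀ z, ctr m ≠ gpt m K δ z := by
    intro z h
    have := dist_ctr_gpt m K δ z (hw16 z)
    rw [h, dist_self] at this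
    norm_num at this
  have hinj : ∀ {z z' : Fin m → Fin K}, z ≠ z' → gpt m K δ z ≠ gpt m K δ z' := by
    intro z z' hne h
    have := gpt_sep m K δ hδ0.le hne
    rw [h, dist_self] at this
    linarith
  -- Ors is nonempty
  have hOrsne : Ors.Nonempty := by
    set q : Pt (m + 1) := WithLp.toLp 2 (fun _ => 1 / 4 : Fin (m + 1) → ℝ) with hq
    have hqc : q ∈ unitCube (m + 1) := by
      intro i
      have hqi : q i = 1 / 4 := rfl
      rw [hqi]; norm_num
    have hsub2 : ({ctr m, q} : Set (Pt (m + 1))) ⊆ unitCube (m + 1) := by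
      intro x hx
      rcases Set.mem_insert_iff.mp hx with rfl | hx
      · exact ctr_mem m
      · rw [Set.mem_singleton_iff] at hx; subst hx; exact hqc
    obtain ⟨n, f, h0, hn, hedge, _⟩ := hspan {ctr m, q}
      ((Set.finite_singleton q).insert _) hsub2 (ctr m) (Set.mem_insert _ _)
      q (Set.mem_insert_of_mem _ rfl)
    have hne2 : ctr m ≠ q := by
      intro h
      have h2 : ctr m 0 = q 0 := congrArg (fun x : Pt (m + 1) => x 0) h
      rw [ctr_apply] at h2
      rw [hq] at h2
      norm_num at h2
    have hn0 : n ≠ 0 := by rintro rfl; rw [h0] at hn; exact hne2 hn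
    obtain ⟨σ, hσ, _⟩ := (hedge 0 (Nat.pos_of_ne_zero hn0)).2.2.2
    exact ⟨σ, hσ⟩
  -- every sphere point is directly connected to the center
  have hdirect : ∀ z : Fin m → Fin K, ∃ σ ∈ Ors, ∀ u ∈ P,
      ¬(σ.lt (ctr m) u ∧ σ.lt u (gpt m K δ z)) ∧
      ¬(σ.lt (gpt m K δ z) u ∧ σ.lt u (ctr m)) := by
    intro z
    obtain ⟨n, f, h0, hn, hedge, hsum⟩ :=
      hspan P hPfin hPsub (ctr m) hctrP (gpt m K δ z) (hgptP z)
    have hQ : ∃ t, f t = gpt m K δ z := ⟨n, hn⟩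
    have hft : f (Nat.find hQ) = gpt m K δ z := Nat.find_spec hQ
    set t := Nat.find hQ with htdef
    have htn : t ≤ n := Nat.find_min' hQ hn
    have ht0 : t ≠ 0 := by
      intro h
      rw [h, h0] at hft
      exact hctrne z hft
    have htn' : t - 1 < n := by omega
    have hedge' := hedge (t - 1) htn'
    rw [show t - 1 + 1 = t by omega, hft] at hedge'
    by_cases hcase : f (t - 1) = ctr m
    · rw [hcase] at hedge'
      exact hedge'.2.2.2
    · exfalso
      rcases Set.mem_insert_iff.mp hedge'.1 with h | ⟨z', hz'⟩
      · exact hcase h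
      have hz'z : z' ≠ z := by
        intro h
        rw [h] at hz'
        exact Nat.find_min hQ (show t - 1 < t by omega) hz'.symm
      have hd1 : dist (f 0) (f (t - 1)) ≤ ∑ i ∈ Finset.range (t - 1), dist (f i) (f (i + 1)) :=
        dist_le_range_sum_dist f (t - 1)
      have hd2 : (∑ i ∈ Finset.range (t - 1), dist (f i) (f (i + 1)))
          + dist (f (t - 1)) (f (t - 1 + 1))
          = ∑ i ∈ Finset.range t, dist (f i) (f (i + 1)) := by
        rw [← Finset.sum_range_succ, show t - 1 + 1 = t by omega]
      have hd3 : (∑ i ∈ Finset.range t, dist (f i) (f (i + 1)))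
          ≤ ∑ i ∈ Finset.range n, dist (f i) (f (i + 1)) :=
        Finset.sum_le_sum_of_subset_of_nonneg (Finset.range_subset_range.mpr htn)
          (fun i _ _ => dist_nonneg)
      have hfp : dist (f 0) (f (t - 1)) = 1 / 4 := by
        rw [h0, ← hz']
        exact dist_ctr_gpt m K δ z' (hw16 z')
      have hsep : δ ≤ dist (f (t - 1)) (f (t - 1 + 1)) := by
        rw [show t - 1 + 1 = t by omega, hft, ← hz']
        exact gpt_sep m K δ hδ0.le hz'z
      have hdz : dist (ctr m) (gpt m K δ z) = 1 / 4 := dist_ctr_gpt m K δ z (hw16 z)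
      rw [hdz] at hsum
      rw [hδdef] at hsep
      linarith
  choose g hg1 hg2 using hdirect
  -- each order serves at most two sphere points
  have hfib : ∀ σ ∈ hfin.toFinset,
      (Finset.univ.filter fun z => g z = σ).card ≤ 2 := by
    intro σ hσ
    by_contra hlt
    push_neg at hlt
    obtain ⟨a, b, c, ha, hb, hc, hab, hac, hbc⟩ := Finset.two_lt_card_iff.mp hlt
    have hga : g a = σ := (Finset.mem_filter.mp ha).2
    have hgb : g b = σ := (Finset.mem_filter.mp hb).2
    have hgc : g c = σ := (Finset.mem_filter.mp hc).2
    have hσOrs : σ ∈ Ors := hfin.mem_toFinset.mp hσ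
    have hdomσ : σ.dom = unitCube (m + 1) := hdom σ hσOrs
    have hdomP : ∀ x ∈ P, x ∈ σ.dom := fun x hx => by rw [hdomσ]; exact hPsub hx
    have hconsa := hga ▸ hg2 a
    have hconsb := hgb ▸ hg2 b
    have hconsc := hgc ▸ hg2 c
    have hup : ∀ z z', z ≠ z' →
        (∀ u ∈ P, ¬(σ.lt (ctr m) u ∧ σ.lt u (gpt m K δ z)) ∧
          ¬(σ.lt (gpt m K δ z) u ∧ σ.lt u (ctr m))) →
        (∀ u ∈ P, ¬(σ.lt (ctr m) u ∧ σ.lt u (gpt m K δ z')) ∧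
          ¬(σ.lt (gpt m K δ z') u ∧ σ.lt u (ctr m))) →
        σ.lt (ctr m) (gpt m K δ z) → σ.lt (ctr m) (gpt m K δ z') → False := by
      intro z z' hne hcz hcz' h1 h2
      rcases σ.total _ (hdomP _ (hgptP z)) _ (hdomP _ (hgptP z')) (hinj hne) with h | h
      · exact (hcz' _ (hgptP z)).1 ⟨h1, h⟩
      · exact (hcz _ (hgptP z')).1 ⟨h2, h⟩
    have hdn : ∀ z z', z ≠ z' →
        (∀ u ∈ P, ¬(σ.lt (ctr m) u ∧ σ.lt u (gpt m K δ z)) ∧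
          ¬(σ.lt (gpt m K δ z) u ∧ σ.lt u (ctr m))) →
        (∀ u ∈ P, ¬(σ.lt (ctr m) u ∧ σ.lt u (gpt m K δ z')) ∧
          ¬(σ.lt (gpt m K δ z') u ∧ σ.lt u (ctr m))) →
        σ.lt (gpt m K δ z) (ctr m) → σ.lt (gpt m K δ z') (ctr m) → False := by
      intro z z' hne hcz hcz' h1 h2
      rcases σ.total _ (hdomP _ (hgptP z)) _ (hdomP _ (hgptP z')) (hinj hne) with h | h
      · exact (hcz _ (hgptP z')).2 ⟨h, h2⟩
      · exact (hcz' _ (hgptP z)).2 ⟨h, h1⟩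
    have sa := σ.total _ (hdomP _ hctrP) _ (hdomP _ (hgptP a)) (hctrne a)
    have sb := σ.total _ (hdomP _ hctrP) _ (hdomP _ (hgptP b)) (hctrne b)
    have sc := σ.total _ (hdomP _ hctrP) _ (hdomP _ (hgptP c)) (hctrne c)
    rcases sa with ha' | ha' <;> rcases sb with hb' | hb' <;> rcases sc with hc' | hc'
    · exact hup a b hab hconsa hconsb ha' hb'
    · exact hup a b hab hconsa hconsb ha' hb'
    · exact hup a c hac hconsa hconsc ha' hc'
    · exact hdn b c hbc hconsb hconsc hb' hc'
    · exact hup b c hbc hconsb hconsc hb' hc'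
    · exact hdn a c hac hconsa hconsc ha' hc'
    · exact hdn a b hab hconsa hconsb ha' hb'
    · exact hdn a b hab hconsa hconsb ha' hb'
  have hcard : K ^ m ≤ 2 * hfin.toFinset.card := by
    have h := Finset.card_le_mul_card_image_of_maps_to
      (f := g) (s := (Finset.univ : Finset (Fin m → Fin K))) (t := hfin.toFinset)
      (fun z _ => hfin.mem_toFinset.mpr (hg1 z)) 2 hfib
    rwa [Finset.card_univ, Fintype.card_fun, Fintype.card_fin, Fintype.card_fin] at h
  refine ⟨hOrsne, ?_⟩
  rw [Set.ncard_eq_toFinset_card Ors hfin]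
  exact_mod_cast hcard

theorem stmt_16 (d : ℕ) (hd : 2 ≤ d) :
    ∃ c : ℝ, 0 < c ∧
      ∀ ε : ℝ, 0 < ε → ε < 1 →
        ∀ Ors : Set (LinOrderOn (Pt d)), Ors.Finite →
          (∀ σ ∈ Ors, σ.dom = unitCube d) →
          (∀ P : Set (Pt d), P.Finite → P ⊆ unitCube d →
            ∀ p ∈ P, ∀ q ∈ P,
              ∃ (n : ℕ) (f : ℕ → Pt d), f 0 = p ∧ f n = q ∧
                (∀ i < n, LocEdge d P Ors (f i) (f (i + 1))) ∧
                ∑ i ∈ Finset.range n, dist (f i) (f (i + 1)) ≤ (1 + ε) * dist p q) →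
          c / ε ^ (d - 1) ≤ (Ors.ncard : ℝ) := by
  obtain ⟨m, rfl⟩ : ∃ m, d = m + 1 := ⟨d - 1, by omega⟩
  have hm : 1 ≤ m := by omega
  set S : ℝ := Real.sqrt ((m : ℝ) + 1) with hSdef
  have hS1 : (1 : ℝ) ≤ S := by
    have h0m : (0 : ℝ) ≤ (m : ℝ) := by positivity
    have := Real.sqrt_le_sqrt (show (1 : ℝ) ≤ (m : ℝ) + 1 by linarith)
    rwa [Real.sqrt_one] at this
  have hS0 : (0 : ℝ) < S := lt_of_lt_of_le one_pos hS1
  refine ⟨(1 / (8 * S)) ^ m / 2, by positivity, ?_⟩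
  intro ε hε0 hε1 Ors hfin hdom hspan
  obtain ⟨hne, hcount⟩ := main_bound m hm ε hε0 hε1 Ors hfin hdom hspan
  have hn1 : (1 : ℝ) ≤ (Ors.ncard : ℝ) := by
    have : 0 < Ors.ncard := (Set.ncard_pos hfin).mpr hne
    exact_mod_cast this
  have hd1 : (m + 1) - 1 = m := rfl
  rw [hd1]
  push_cast at hcount
  by_cases hcase : 1 / (8 * S) ≤ ε
  · have h1 : (1 / (8 * S)) ^ m ≤ ε ^ m := pow_le_pow_left₀ (by positivity) hcase m
    have hεm : (0 : ℝ) < ε ^ m := by positivity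
    calc (1 / (8 * S)) ^ m / 2 / ε ^ m ≤ ε ^ m / 2 / ε ^ m := by gcongr
      _ = 1 / 2 := by field_simp
      _ ≤ (Ors.ncard : ℝ) := by linarith
  · push_neg at hcase
    have hx : (2 : ℝ) ≤ 1 / (4 * S * ε) := by
      rw [le_div_iff₀ (by positivity)]
      have h9 : ε * (8 * S) < 1 := (lt_div_iff₀ (by positivity)).mp hcase
      nlinarith
    have hK : 1 / (8 * S * ε) ≤ ((⌊1 / (4 * S * ε)⌋₊ : ℕ) : ℝ) := by
      have h5 := Nat.sub_one_lt_floor (1 / (4 * S * ε))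
      have h6 : 1 / (8 * S * ε) = (1 / (4 * S * ε)) / 2 := by
        rw [div_div]
        ring_nf
      rw [h6]
      linarith
    have h4 : (1 / (8 * S * ε)) ^ m ≤ ((⌊1 / (4 * S * ε)⌋₊ : ℕ) : ℝ) ^ m :=
      pow_le_pow_left₀ (by positivity) hK m
    have h3 : (1 / (8 * S)) ^ m / ε ^ m = (1 / (8 * S * ε)) ^ m := by
      rw [← div_pow, div_div]
    calc (1 / (8 * S)) ^ m / 2 / ε ^ m
        = (1 / (8 * S)) ^ m / ε ^ m / 2 := by ring
      _ = (1 / (8 * S * ε)) ^ m / 2 := by rw [h3]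
      _ ≤ 2 * (Ors.ncard : ℝ) / 2 := by
          apply div_le_div_of_nonneg_right ?_ (by norm_num)
          exact le_trans h4 hcount
      _ = (Ors.ncard : ℝ) := by ring
end
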